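/- arXiv:2112.03961 — 8 statements merged into one kernel-verified Lean document; each statement's English description precedes it below -/
import Mathlib

section
/- Let G be a finite simple graph on n vertices with independence number α(G) = 2. If G has a dominating edge uv such that the graph G \ {u,v} obtained by deleting the vertices u and v has diameter 3, then the edge clique cover number of G satisfies ecc(G) ≤ n. -/
set_option linter.unusedSectionVars false
set_option maxHeartbeats 1000000

/-- A set of pairwise non-adjacent vertices of `G`. -/
def IsIndepSet {V : Type*} (G : SimpleGraph V) (s : Set V) : Prop :=
  s.Pairwise fun a b => ¬ G.Adj a b

/-- The independence number of `G` equals `k`: there is an independent set of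
size `k` and every independent set has size at most `k`. -/
def IndepNumEq {V : Type*} (G : SimpleGraph V) (k : ℕ) : Prop :=
  (∃ s : Finset V, IsIndepSet G ↑s ∧ s.card = k) ∧
    ∀ s : Finset V, IsIndepSet G ↑s → s.card ≤ k

/-- `uv` is a dominating edge of `G`: it is an edge and every other vertex is
adjacent to `u` or to `v`. -/
def IsDominatingEdge {V : Type*} (G : SimpleGraph V) (u v : V) : Prop :=
  G.Adj u v ∧ ∀ w, w ≠ u → w ≠ v → G.Adj w u ∨ G.Adj w v

lemma alpha_pair {V : Type*} [DecidableEq V] {G : SimpleGraph V} (hα : IndepNumEq G 2) :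
    ∀ x y z : V, x ≠ y → x ≠ z → y ≠ z →
    ¬G.Adj x y → ¬G.Adj x z → G.Adj y z := by
  intro x y z hxy hxz hyz hnxy hnxz
  by_contra hnyz
  have hind : IsIndepSet G (↑({x, y, z} : Finset V)) := by
    intro p hp q hq hpq
    simp only [Finset.coe_insert, Set.mem_insert_iff, Finset.coe_singleton,
      Finset.mem_coe, Finset.mem_singleton, Finset.mem_insert] at hp hq
    rcases hp with rfl | rfl | rfl <;> rcases hq with rfl | rfl | rfl <;>
      first
        | exact absurd rfl hpq
        | exact hnxy
        | exact hnxz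
        | exact hnyz
        | exact fun h => hnxy h.symm
        | exact fun h => hnxz h.symm
        | exact fun h => hnyz h.symm
  have hcard : ({x, y, z} : Finset V).card = 3 := by
    rw [Finset.card_insert_of_notMem (by simp [hxy, hxz]),
      Finset.card_insert_of_notMem (by simp [hyz]), Finset.card_singleton]
  have := hα.2 _ hind
  omega


lemma diam_extract {V : Type*} (G : SimpleGraph V) (u v : V)
    (hdiam : (G.induce {w : V | w ≠ u ∧ w ≠ v}).diam = 3) :
    ∃ a b x0 y0 : V, a ≠ u ∧ a ≠ v ∧ b ≠ u ∧ b ≠ v ∧ x0 ≠ u ∧ x0 ≠ v ∧ y0 ≠ u ∧ y0 ≠ v ∧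
      a ≠ b ∧ ¬G.Adj a b ∧ (∀ w, w ≠ u → w ≠ v → ¬(G.Adj a w ∧ G.Adj b w)) ∧
      G.Adj a x0 ∧ G.Adj x0 y0 ∧ G.Adj y0 b := by
  set s : Set V := {w : V | w ≠ u ∧ w ≠ v} with hs
  set H : SimpleGraph s := G.induce s with hH
  cases isEmpty_or_nonempty s with
  | inl he =>
    exfalso
    have h0 : H.ediam = 0 := by
      rw [SimpleGraph.ediam]
      simp [ciSup_of_empty]
    rw [SimpleGraph.diam, h0] at hdiam
    simp at hdiam
  | inr hne =>
    obtain ⟨p, q, hpq⟩ := H.exists_dist_eq_diam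
    rw [hdiam] at hpq
    have hreach : H.dist p q ≠ 0 := by omega
    have hpq_ne : p ≠ q := (SimpleGraph.dist_ne_zero_iff_ne_and_reachable.mp hreach).1
    obtain ⟨w, hw⟩ := H.exists_walk_of_dist_ne_zero hreach
    rw [hpq] at hw
    cases w with
    | nil => simp at hw
    | cons h1 w1 =>
      rename_i m1
      cases w1 with
      | nil => simp at hw
      | cons h2 w2 =>
        rename_i m2
        cases w2 with
        | nil => simp at hw
        | cons h3 w3 =>
          rename_i m3
          cases w3 with
          | cons h4 w4 => simp at hw
          | nil =>
            have ha1 : G.Adj (p : V) (m1 : V) := h1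
            have ha2 : G.Adj (m1 : V) (m2 : V) := h2
            have ha3 : G.Adj (m2 : V) (q : V) := h3
            refine ⟨p, q, m1, m2, p.2.1, p.2.2, q.2.1, q.2.2, m1.2.1, m1.2.2, m2.2.1, m2.2.2,
              fun hh => hpq_ne (Subtype.coe_injective hh), ?_, ?_, ha1, ha2, ?_⟩
            · intro hadj
              have hadj' : H.Adj p q := hadj
              have := SimpleGraph.dist_eq_one_iff_adj.mpr hadj'
              omega
            · intro z hzu hzv ⟨ha, hb⟩
              have hmem : z ∈ s := ⟨hzu, hzv⟩
              have hh1 : H.Adj p ⟨z, hmem⟩ := ha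
              have hh2 : H.Adj ⟨z, hmem⟩ q := hb.symm
              have hle := H.dist_le (hh1.toWalk.append hh2.toWalk)
              simp only [SimpleGraph.Walk.length_append, SimpleGraph.Adj.toWalk,
                SimpleGraph.Walk.length_cons, SimpleGraph.Walk.length_nil] at hle
              omega
            · exact ha3


open Finset in
open Classical in
noncomputable def nonNbrs {V : Type*} [Fintype V] (G : SimpleGraph V) (a : V) : Finset V :=
  Finset.univ.filter (fun z => z ≠ a ∧ ¬G.Adj a z)

lemma mem_nonNbrs {V : Type*} [Fintype V] {G : SimpleGraph V} {a z : V} :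
    z ∈ nonNbrs G a ↔ z ≠ a ∧ ¬G.Adj a z := by
  simp [nonNbrs]

open Classical in
noncomputable def nbrIn {V : Type*} (G : SimpleGraph V) (w : V) (S : Finset V) : Finset V :=
  S.filter (fun z => G.Adj w z)

lemma mem_nbrIn {V : Type*} {G : SimpleGraph V} {w z : V} {S : Finset V} :
    z ∈ nbrIn G w S ↔ z ∈ S ∧ G.Adj w z := by
  simp [nbrIn]

/-- The target statement -/
def Concl {V : Type*} [Fintype V] (G : SimpleGraph V) : Prop :=
  ∃ F : Finset (Finset V), F.card ≤ Fintype.card V ∧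
      (∀ s ∈ F, G.IsClique (s : Set V)) ∧
      ∀ x y : V, G.Adj x y → ∃ s ∈ F, x ∈ s ∧ y ∈ s

structure Ctx {V : Type*} [Fintype V] (G : SimpleGraph V) (u v a b : V) (A Bs : Finset V) : Prop where
  hpair : ∀ x y z : V, x ≠ y → x ≠ z → y ≠ z → ¬G.Adj x y → ¬G.Adj x z → G.Adj y z
  huv : G.Adj u v
  hab : ¬G.Adj a b
  hne_ab : a ≠ b
  hau : a ≠ u
  hav : a ≠ v
  hbu : b ≠ u
  hbv : b ≠ v
  hnocom : ∀ w, w ≠ u → w ≠ v → ¬(G.Adj a w ∧ G.Adj b w)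
  hA : ∀ x, x ∈ A ↔ x ≠ u ∧ x ≠ v ∧ x ≠ a ∧ x ≠ b ∧ G.Adj a x
  hB : ∀ x, x ∈ Bs ↔ x ≠ u ∧ x ≠ v ∧ x ≠ a ∧ x ≠ b ∧ G.Adj b x

namespace Ctx

variable {V : Type*} [Fintype V] [DecidableEq V] {G : SimpleGraph V} {u v a b : V}
  {A Bs : Finset V} (C : Ctx G u v a b A Bs)

include C

lemma swapUV : Ctx G v u a b A Bs where
  hpair := C.hpair
  huv := C.huv.symm
  hab := C.hab
  hne_ab := C.hne_ab
  hau := C.hav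
  hav := C.hau
  hbu := C.hbv
  hbv := C.hbu
  hnocom := fun w h1 h2 => C.hnocom w h2 h1
  hA := fun x => (C.hA x).trans (by tauto)
  hB := fun x => (C.hB x).trans (by tauto)

lemma swapAB : Ctx G u v b a Bs A where
  hpair := C.hpair
  huv := C.huv
  hab := fun h => C.hab h.symm
  hne_ab := C.hne_ab.symm
  hau := C.hbu
  hav := C.hbv
  hbu := C.hau
  hbv := C.hav
  hnocom := fun w h1 h2 h => C.hnocom w h1 h2 ⟨h.2, h.1⟩
  hA := fun x => (C.hB x).trans (by tauto)
  hB := fun x => (C.hA x).trans (by tauto)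

lemma nadj_bA {x : V} (hx : x ∈ A) : ¬G.Adj b x := by
  obtain ⟨h1, h2, _, _, h5⟩ := (C.hA x).mp hx
  exact fun hb => C.hnocom x h1 h2 ⟨h5, hb⟩

lemma nadj_aB {y : V} (hy : y ∈ Bs) : ¬G.Adj a y := by
  obtain ⟨h1, h2, _, _, h5⟩ := (C.hB y).mp hy
  exact fun ha => C.hnocom y h1 h2 ⟨ha, h5⟩

lemma adj_aA {x : V} (hx : x ∈ A) : G.Adj a x := ((C.hA x).mp hx).2.2.2.2

lemma adj_bB {y : V} (hy : y ∈ Bs) : G.Adj b y := ((C.hB y).mp hy).2.2.2.2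

lemma A_ne_b {x : V} (hx : x ∈ A) : x ≠ b := ((C.hA x).mp hx).2.2.2.1
lemma A_ne_a {x : V} (hx : x ∈ A) : x ≠ a := ((C.hA x).mp hx).2.2.1
lemma A_ne_u {x : V} (hx : x ∈ A) : x ≠ u := ((C.hA x).mp hx).1
lemma A_ne_v {x : V} (hx : x ∈ A) : x ≠ v := ((C.hA x).mp hx).2.1
lemma B_ne_a {y : V} (hy : y ∈ Bs) : y ≠ a := ((C.hB y).mp hy).2.2.1
lemma B_ne_b {y : V} (hy : y ∈ Bs) : y ≠ b := ((C.hB y).mp hy).2.2.2.1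
lemma B_ne_u {y : V} (hy : y ∈ Bs) : y ≠ u := ((C.hB y).mp hy).1
lemma B_ne_v {y : V} (hy : y ∈ Bs) : y ≠ v := ((C.hB y).mp hy).2.1

lemma AB_disj {x : V} (hx : x ∈ A) : x ∉ Bs := fun hy => C.nadj_aB hy (C.adj_aA hx)

/-- two non-neighbours of `b` are adjacent -/
lemma adj_of_nonadj_b {p q : V} (hpb : p ≠ b) (hqb : q ≠ b) (hpq : p ≠ q)
    (hp : ¬G.Adj b p) (hq : ¬G.Adj b q) : G.Adj p q :=
  C.hpair b p q (Ne.symm hpb) (Ne.symm hqb) hpq hp hq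

lemma adj_of_nonadj_a {p q : V} (hpb : p ≠ a) (hqb : q ≠ a) (hpq : p ≠ q)
    (hp : ¬G.Adj a p) (hq : ¬G.Adj a q) : G.Adj p q :=
  C.hpair a p q (Ne.symm hpb) (Ne.symm hqb) hpq hp hq

lemma A_adj {x x' : V} (hx : x ∈ A) (hx' : x' ∈ A) (hne : x ≠ x') : G.Adj x x' :=
  C.adj_of_nonadj_b (C.A_ne_b hx) (C.A_ne_b hx') hne (C.nadj_bA hx) (C.nadj_bA hx')

lemma B_adj {y y' : V} (hy : y ∈ Bs) (hy' : y' ∈ Bs) (hne : y ≠ y') : G.Adj y y' :=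
  C.adj_of_nonadj_a (C.B_ne_a hy) (C.B_ne_a hy') hne (C.nadj_aB hy) (C.nadj_aB hy')

lemma classify (z : V) : z = u ∨ z = v ∨ z = a ∨ z = b ∨ z ∈ A ∨ z ∈ Bs := by
  by_cases h1 : z = u; · tauto
  by_cases h2 : z = v; · tauto
  by_cases h3 : z = a; · tauto
  by_cases h4 : z = b; · tauto
  by_cases h5 : G.Adj a z
  · exact Or.inr (Or.inr (Or.inr (Or.inr (Or.inl ((C.hA z).mpr ⟨h1, h2, h3, h4, h5⟩)))))
  · have h6 : G.Adj b z := C.hpair a b z C.hne_ab (fun h => h3 h.symm) (fun h => h4 h.symm)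
      C.hab h5
    exact Or.inr (Or.inr (Or.inr (Or.inr (Or.inr ((C.hB z).mpr ⟨h1, h2, h3, h4, h6⟩)))))

lemma u_ne_v : u ≠ v := C.huv.ne

lemma budget : A.card + Bs.card + 4 ≤ Fintype.card V := by
  classical
  have hd1 : Disjoint A Bs := by
    rw [Finset.disjoint_left]; exact fun x hx => C.AB_disj hx
  have hd2 : Disjoint (A ∪ Bs) ({u, v, a, b} : Finset V) := by
    rw [Finset.disjoint_left]
    intro x hx hx'
    simp only [Finset.mem_insert, Finset.mem_singleton] at hx'
    rcases Finset.mem_union.mp hx with h | h <;> rcases hx' with rfl | rfl | rfl | rfl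
    · exact C.A_ne_u h rfl
    · exact C.A_ne_v h rfl
    · exact C.A_ne_a h rfl
    · exact C.A_ne_b h rfl
    · exact C.B_ne_u h rfl
    · exact C.B_ne_v h rfl
    · exact C.B_ne_a h rfl
    · exact C.B_ne_b h rfl
  have hcard4 : ({u, v, a, b} : Finset V).card = 4 := by
    rw [Finset.card_insert_of_notMem (by simp [C.u_ne_v, C.hau.symm, C.hbu.symm]),
      Finset.card_insert_of_notMem (by simp [C.hav.symm, C.hbv.symm]),
      Finset.card_insert_of_notMem (by simp [C.hne_ab]), Finset.card_singleton]
  calc A.card + Bs.card + 4 = ((A ∪ Bs) ∪ {u, v, a, b}).card := by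
        rw [Finset.card_union_of_disjoint hd2, Finset.card_union_of_disjoint hd1, hcard4]
      _ ≤ Fintype.card V := Finset.card_le_univ _


lemma Qb_clique : G.IsClique (↑(nonNbrs G b) : Set V) := by
  intro p hp q hq hne
  simp only [Finset.mem_coe, mem_nonNbrs] at hp hq
  exact C.adj_of_nonadj_b hp.1 hq.1 hne hp.2 hq.2

lemma A_mem_Qb {x : V} (hx : x ∈ A) : x ∈ nonNbrs G b :=
  mem_nonNbrs.mpr ⟨C.A_ne_b hx, C.nadj_bA hx⟩

lemma a_mem_Qb : a ∈ nonNbrs G b :=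
  mem_nonNbrs.mpr ⟨C.hne_ab, fun h => C.hab h.symm⟩

lemma mem_Qb_of {p : V} (h1 : p ≠ b) (h2 : ¬G.Adj b p) : p ∈ nonNbrs G b :=
  mem_nonNbrs.mpr ⟨h1, h2⟩

/-- assemble: given a family `Fr` of cliques covering all edges except those
between non-neighbours of `b`, conclude. -/
lemma assemble (Fr : Finset (Finset V))
    (hcl : ∀ s ∈ Fr, G.IsClique (s : Set V))
    (hcard : Fr.card + 1 ≤ Fintype.card V)
    (hcov : ∀ x y, G.Adj x y →
      ((x ≠ b ∧ ¬G.Adj b x) ∧ (y ≠ b ∧ ¬G.Adj b y)) ∨ ∃ s ∈ Fr, x ∈ s ∧ y ∈ s) :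
    Concl G := by
  classical
  refine ⟨insert (nonNbrs G b) Fr, ?_, ?_, ?_⟩
  · exact (Finset.card_insert_le _ _).trans hcard
  · intro s hs
    rcases Finset.mem_insert.mp hs with rfl | hs
    · exact C.Qb_clique
    · exact hcl s hs
  · intro x y hxy
    rcases hcov x y hxy with ⟨⟨h1, h2⟩, h3, h4⟩ | ⟨s, hs, hxs, hys⟩
    · exact ⟨nonNbrs G b, Finset.mem_insert_self _ _,
        C.mem_Qb_of h1 h2, C.mem_Qb_of h3 h4⟩
    · exact ⟨s, Finset.mem_insert_of_mem hs, hxs, hys⟩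

/-- the default slot for `x ∈ A`, covering all A–B edges at `x`. -/
lemma xslot_clique {x : V} (hx : x ∈ A) :
    G.IsClique (↑(insert x (nbrIn G x Bs)) : Set V) := by
  intro p hp q hq hne
  simp only [Finset.coe_insert, Set.mem_insert_iff, Finset.mem_coe, mem_nbrIn] at hp hq
  rcases hp with rfl | ⟨hp1, hp2⟩ <;> rcases hq with rfl | ⟨hq1, hq2⟩
  · exact absurd rfl hne
  · exact hq2
  · exact hp2.symm
  · exact C.B_adj hp1 hq1 hne

/-- star at `u` into `B`-side, no apex. -/
lemma star_uB_clique : G.IsClique (↑(insert u (nbrIn G u Bs)) : Set V) := by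
  intro p hp q hq hne
  simp only [Finset.coe_insert, Set.mem_insert_iff, Finset.mem_coe, mem_nbrIn] at hp hq
  rcases hp with rfl | ⟨hp1, hp2⟩ <;> rcases hq with rfl | ⟨hq1, hq2⟩
  · exact absurd rfl hne
  · exact hq2
  · exact hp2.symm
  · exact C.B_adj hp1 hq1 hne

/-- star at `u` into `A`-side with apex `a`; needs `u ~ a`. -/
lemma star_uaA_clique (hua : G.Adj u a) :
    G.IsClique (↑(insert u (insert a (nbrIn G u A))) : Set V) := by
  intro p hp q hq hne
  simp only [Finset.coe_insert, Set.mem_insert_iff, Finset.mem_coe, mem_nbrIn] at hp hq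
  rcases hp with rfl | rfl | ⟨hp1, hp2⟩ <;> rcases hq with rfl | rfl | ⟨hq1, hq2⟩
  · exact absurd rfl hne
  · exact hua
  · exact hq2
  · exact hua.symm
  · exact absurd rfl hne
  · exact C.adj_aA hq1
  · exact hp2.symm
  · exact (C.adj_aA hp1).symm
  · exact C.A_adj hp1 hq1 hne

/-- the `T_y` slot: `{y, b} ∪ ({u,v} ∩ N(y))`; needs `u ~ b` and `v ~ b`. -/
lemma Ty_clique {y : V} (hy : y ∈ Bs) (hub : G.Adj u b) (hvb : G.Adj v b) :
    G.IsClique (↑(insert y (insert b (nbrIn G y ({u, v} : Finset V)))) : Set V) := by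
  intro p hp q hq hne
  simp only [Finset.coe_insert, Set.mem_insert_iff, Finset.mem_coe, mem_nbrIn,
    Finset.mem_insert, Finset.mem_singleton] at hp hq
  rcases hp with rfl | rfl | ⟨rfl | rfl, hp2⟩ <;> rcases hq with rfl | rfl | ⟨rfl | rfl, hq2⟩ <;>
    first
    | exact absurd rfl hne
    | exact C.adj_bB hy
    | exact (C.adj_bB hy).symm
    | exact hq2.symm
    | exact hq2
    | exact hp2
    | exact hp2.symm
    | exact hub
    | exact hub.symm
    | exact hvb
    | exact hvb.symm
    | exact C.huv
    | exact C.huv.symm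

/-- slot `{x, u} ∪ (B ∩ N(x))` used in case 4iii -/
lemma xslot2_clique {x : V} (hx : x ∈ A) (hux : G.Adj u x) (huB : ∀ y ∈ Bs, G.Adj u y) :
    G.IsClique (↑(insert x (insert u (nbrIn G x Bs))) : Set V) := by
  intro p hp q hq hne
  simp only [Finset.coe_insert, Set.mem_insert_iff, Finset.mem_coe, mem_nbrIn] at hp hq
  rcases hp with rfl | rfl | ⟨hp1, hp2⟩ <;> rcases hq with rfl | rfl | ⟨hq1, hq2⟩
  · exact absurd rfl hne
  · exact hux.symm
  · exact hq2
  · exact hux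
  · exact absurd rfl hne
  · exact huB _ hq1
  · exact hp2.symm
  · exact (huB _ hp1).symm
  · exact C.B_adj hp1 hq1 hne

/-- slot `{y, b, v} ∪ (B ∩ N(y))` used in case 5b -/
lemma Tprime_clique {y : V} (hy : y ∈ Bs) (hvb : G.Adj v b) (hvB : ∀ y' ∈ Bs, G.Adj v y') :
    G.IsClique (↑(insert y (insert b (insert v (nbrIn G y Bs)))) : Set V) := by
  intro p hp q hq hne
  simp only [Finset.coe_insert, Set.mem_insert_iff, Finset.mem_coe, mem_nbrIn] at hp hq
  rcases hp with rfl | rfl | rfl | ⟨hp1, hp2⟩ <;> rcases hq with rfl | rfl | rfl | ⟨hq1, hq2⟩ <;>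
    first
    | exact absurd rfl hne
    | exact C.adj_bB hy
    | exact (C.adj_bB hy).symm
    | exact (hvB _ hy).symm
    | exact hvB _ hy
    | exact hvb
    | exact hvb.symm
    | exact hq2
    | exact hp2.symm
    | exact C.adj_bB hq1
    | exact (C.adj_bB hp1).symm
    | exact hvB _ hq1
    | exact (hvB _ hp1).symm
    | exact C.B_adj hp1 hq1 hne

/-- slot `{u} ∪ (N(u) ∩ A) ∪ (N(u) ∩ B)` used in case 5e -/
lemma Mu_clique (hnoA : ∀ x ∈ A, ¬(G.Adj u x ∧ G.Adj v x))
    (hnoB : ∀ y ∈ Bs, ¬(G.Adj u y ∧ G.Adj v y)) :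
    G.IsClique (↑(insert u (nbrIn G u A ∪ nbrIn G u Bs)) : Set V) := by
  have key : ∀ p q, p ∈ A → q ∈ Bs → G.Adj u p → G.Adj u q → G.Adj p q := by
    intro p q hp hq h1 h2
    refine C.hpair v p q ?_ ?_ ?_ ?_ ?_
    · exact (C.A_ne_v hp).symm
    · exact (C.B_ne_v hq).symm
    · exact fun h => C.AB_disj hp (h ▸ hq)
    · exact fun h => hnoA p hp ⟨h1, h⟩
    · exact fun h => hnoB q hq ⟨h2, h⟩
  intro p hp q hq hne
  simp only [Finset.coe_insert, Set.mem_insert_iff, Finset.mem_coe, Finset.mem_union,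
    mem_nbrIn] at hp hq
  rcases hp with rfl | ⟨hp1, hp2⟩ | ⟨hp1, hp2⟩ <;> rcases hq with rfl | ⟨hq1, hq2⟩ | ⟨hq1, hq2⟩ <;>
    first
    | exact absurd rfl hne
    | exact hq2
    | exact hp2.symm
    | exact C.A_adj hp1 hq1 hne
    | exact C.B_adj hp1 hq1 hne
    | exact key _ _ hp1 hq1 hp2 hq2
    | exact (key _ _ hq1 hp1 hq2 hp2).symm

lemma pair_clique {p q : V} (h : G.Adj p q) : G.IsClique (↑({p, q} : Finset V) : Set V) := by
  intro x hx y hy hne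
  simp only [Finset.coe_insert, Set.mem_insert_iff, Finset.coe_singleton, Finset.mem_coe,
    Finset.mem_singleton] at hx hy
  rcases hx with rfl | rfl <;> rcases hy with rfl | rfl <;>
    first | exact absurd rfl hne | exact h | exact h.symm

lemma triple_clique {p q r : V} (h1 : G.Adj p q) (h2 : G.Adj p r) (h3 : G.Adj q r) :
    G.IsClique (↑({p, q, r} : Finset V) : Set V) := by
  intro x hx y hy hne
  simp only [Finset.coe_insert, Set.mem_insert_iff, Finset.coe_singleton, Finset.mem_coe,
    Finset.mem_singleton] at hx hy
  rcases hx with rfl | rfl | rfl <;> rcases hy with rfl | rfl | rfl <;>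
    first
    | exact absurd rfl hne
    | exact h1
    | exact h1.symm
    | exact h2
    | exact h2.symm
    | exact h3
    | exact h3.symm

end Ctx


namespace Ctx

variable {V : Type*} [Fintype V] [DecidableEq V] {G : SimpleGraph V} {u v a b : V}
  {A Bs : Finset V} (C : Ctx G u v a b A Bs)

include C

/-- Case L1 : `u` and `v` are both non-adjacent to `b`. -/
lemma leafL1 (hub : ¬G.Adj u b) (hvb : ¬G.Adj v b) : Concl G := by
  classical
  set Qa : Finset V := nonNbrs G a with hQa
  set SuB : Finset V := insert u (nbrIn G u Bs) with hSuB
  set SvB : Finset V := insert v (nbrIn G v Bs) with hSvB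
  set Fr : Finset (Finset V) :=
    insert Qa (insert SuB (insert SvB (A.image fun x => insert x (nbrIn G x Bs)))) with hFr
  have mQa : Qa ∈ Fr := Finset.mem_insert_self _ _
  have mSuB : SuB ∈ Fr := Finset.mem_insert_of_mem (Finset.mem_insert_self _ _)
  have mSvB : SvB ∈ Fr :=
    Finset.mem_insert_of_mem (Finset.mem_insert_of_mem (Finset.mem_insert_self _ _))
  have mxs : ∀ x ∈ A, insert x (nbrIn G x Bs) ∈ Fr := fun x hx =>
    Finset.mem_insert_of_mem (Finset.mem_insert_of_mem (Finset.mem_insert_of_mem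
      (Finset.mem_image_of_mem _ hx)))
  have hbmemQa : b ∈ Qa := mem_nonNbrs.mpr ⟨C.hne_ab.symm, C.hab⟩
  have hBmemQa : ∀ y ∈ Bs, y ∈ Qa := fun y hy => mem_nonNbrs.mpr ⟨C.B_ne_a hy, C.nadj_aB hy⟩
  refine C.assemble Fr ?_ ?_ ?_
  · -- cliques
    intro s hs
    rw [hFr] at hs
    rcases Finset.mem_insert.mp hs with rfl | hs
    · exact C.swapAB.Qb_clique
    rcases Finset.mem_insert.mp hs with rfl | hs
    · exact C.star_uB_clique
    rcases Finset.mem_insert.mp hs with rfl | hs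
    · exact C.swapUV.star_uB_clique
    obtain ⟨x, hx, rfl⟩ := Finset.mem_image.mp hs
    exact C.xslot_clique hx
  · -- cardinality
    have h1 : Fr.card ≤ A.card + 3 := by
      rw [hFr]
      calc (insert Qa (insert SuB (insert SvB (A.image fun x => insert x (nbrIn G x Bs))))).card
          ≤ (insert SuB (insert SvB (A.image fun x => insert x (nbrIn G x Bs)))).card + 1 :=
            Finset.card_insert_le _ _
        _ ≤ ((insert SvB (A.image fun x => insert x (nbrIn G x Bs))).card + 1) + 1 := by
            exact Nat.add_le_add_right (Finset.card_insert_le _ _) 1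
        _ ≤ (((A.image fun x => insert x (nbrIn G x Bs)).card + 1) + 1) + 1 := by
            exact Nat.add_le_add_right (Nat.add_le_add_right (Finset.card_insert_le _ _) 1) 1
        _ ≤ A.card + 3 := by
            have := Finset.card_image_le (s := A) (f := fun x => insert x (nbrIn G x Bs))
            omega
    have h2 := C.budget
    omega
  · -- coverage
    intro x y hxy
    have sideP : ∀ p, (p = u ∨ p = v ∨ p = a ∨ p ∈ A) → p ≠ b ∧ ¬G.Adj b p := by
      rintro p (rfl | rfl | rfl | hp)
      · exact ⟨C.hbu.symm, fun h => hub h.symm⟩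
      · exact ⟨C.hbv.symm, fun h => hvb h.symm⟩
      · exact ⟨C.hne_ab, fun h => C.hab h.symm⟩
      · exact ⟨C.A_ne_b hp, C.nadj_bA hp⟩
    rcases C.classify x with rfl | rfl | rfl | rfl | hx | hx <;>
      rcases C.classify y with rfl | rfl | rfl | rfl | hy | hy <;>
      try (first
        | exact (hxy.ne rfl).elim
        | exact absurd hxy hub
        | exact absurd hxy hvb
        | exact absurd hxy C.hab
        | exact absurd hxy.symm hub
        | exact absurd hxy.symm hvb
        | exact absurd hxy.symm C.hab
        | exact absurd hxy (C.nadj_aB ‹_›)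
        | exact absurd hxy.symm (C.nadj_aB ‹_›)
        | exact absurd hxy (C.nadj_bA ‹_›)
        | exact absurd hxy.symm (C.nadj_bA ‹_›)
        | (refine Or.inl ⟨sideP _ ?_, sideP _ ?_⟩ <;> tauto))
    -- leftovers
    · exact Or.inr ⟨SuB, mSuB, Finset.mem_insert_self _ _,
        Finset.mem_insert_of_mem (mem_nbrIn.mpr ⟨hy, hxy⟩)⟩
    · exact Or.inr ⟨SvB, mSvB, Finset.mem_insert_self _ _,
        Finset.mem_insert_of_mem (mem_nbrIn.mpr ⟨hy, hxy⟩)⟩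
    · exact Or.inr ⟨Qa, mQa, hbmemQa, hBmemQa y hy⟩
    · exact Or.inr ⟨insert x (nbrIn G x Bs), mxs x hx, Finset.mem_insert_self _ _,
        Finset.mem_insert_of_mem (mem_nbrIn.mpr ⟨hy, hxy⟩)⟩
    · exact Or.inr ⟨SuB, mSuB, Finset.mem_insert_of_mem (mem_nbrIn.mpr ⟨hx, hxy.symm⟩),
        Finset.mem_insert_self _ _⟩
    · exact Or.inr ⟨SvB, mSvB, Finset.mem_insert_of_mem (mem_nbrIn.mpr ⟨hx, hxy.symm⟩),
        Finset.mem_insert_self _ _⟩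
    · exact Or.inr ⟨Qa, mQa, hBmemQa x hx, hbmemQa⟩
    · exact Or.inr ⟨insert y (nbrIn G y Bs), mxs y hy, Finset.mem_insert_of_mem
        (mem_nbrIn.mpr ⟨hx, hxy.symm⟩), Finset.mem_insert_self _ _⟩
    · exact Or.inr ⟨Qa, mQa, hBmemQa x hx, hBmemQa y hy⟩

end Ctx


namespace Ctx

variable {V : Type*} [Fintype V] [DecidableEq V] {G : SimpleGraph V} {u v a b : V}
  {A Bs : Finset V} (C : Ctx G u v a b A Bs)

include C

/-- Case L2 : `u` non-adjacent to `b`, `v` non-adjacent to `a`. -/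
lemma leafL2 (hub : ¬G.Adj u b) (hva : ¬G.Adj v a) {y0 : V} (hy0 : y0 ∈ Bs) : Concl G := by
  classical
  set Qa : Finset V := nonNbrs G a with hQa
  set SuB : Finset V := insert u (nbrIn G u Bs) with hSuB
  set SvA : Finset V := insert v (nbrIn G v A) with hSvA
  set Kuv : Finset V := ({u, v} : Finset V) with hKuv
  set Fr : Finset (Finset V) :=
    insert Qa (insert SuB (insert SvA (insert Kuv
      (A.image fun x => insert x (nbrIn G x Bs))))) with hFr
  have mQa : Qa ∈ Fr := Finset.mem_insert_self _ _
  have mSuB : SuB ∈ Fr := Finset.mem_insert_of_mem (Finset.mem_insert_self _ _)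
  have mSvA : SvA ∈ Fr :=
    Finset.mem_insert_of_mem (Finset.mem_insert_of_mem (Finset.mem_insert_self _ _))
  have mKuv : Kuv ∈ Fr := Finset.mem_insert_of_mem (Finset.mem_insert_of_mem
    (Finset.mem_insert_of_mem (Finset.mem_insert_self _ _)))
  have mxs : ∀ x ∈ A, insert x (nbrIn G x Bs) ∈ Fr := fun x hx =>
    Finset.mem_insert_of_mem (Finset.mem_insert_of_mem (Finset.mem_insert_of_mem
      (Finset.mem_insert_of_mem (Finset.mem_image_of_mem _ hx))))
  have hbmemQa : b ∈ Qa := mem_nonNbrs.mpr ⟨C.hne_ab.symm, C.hab⟩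
  have hBmemQa : ∀ y ∈ Bs, y ∈ Qa := fun y hy => mem_nonNbrs.mpr ⟨C.B_ne_a hy, C.nadj_aB hy⟩
  have hvmemQa : v ∈ Qa := mem_nonNbrs.mpr ⟨C.hav.symm, fun h => hva h.symm⟩
  refine C.assemble Fr ?_ ?_ ?_
  · intro s hs
    rw [hFr] at hs
    rcases Finset.mem_insert.mp hs with rfl | hs
    · exact C.swapAB.Qb_clique
    rcases Finset.mem_insert.mp hs with rfl | hs
    · exact C.star_uB_clique
    rcases Finset.mem_insert.mp hs with rfl | hs
    · exact C.swapUV.swapAB.star_uB_clique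
    rcases Finset.mem_insert.mp hs with rfl | hs
    · exact C.pair_clique C.huv
    obtain ⟨x, hx, rfl⟩ := Finset.mem_image.mp hs
    exact C.xslot_clique hx
  · have h1 : (A.image fun x => insert x (nbrIn G x Bs)).card ≤ A.card :=
      Finset.card_image_le
    have h2 : Fr.card ≤ A.card + 4 := by
      rw [hFr]
      have c1 := Finset.card_insert_le Qa (insert SuB (insert SvA (insert Kuv
        (A.image fun x => insert x (nbrIn G x Bs)))))
      have c2 := Finset.card_insert_le SuB (insert SvA (insert Kuv
        (A.image fun x => insert x (nbrIn G x Bs))))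
      have c3 := Finset.card_insert_le SvA (insert Kuv
        (A.image fun x => insert x (nbrIn G x Bs)))
      have c4 := Finset.card_insert_le Kuv (A.image fun x => insert x (nbrIn G x Bs))
      omega
    have h3 := C.budget
    have h4 : 1 ≤ Bs.card := Finset.card_pos.mpr ⟨y0, hy0⟩
    omega
  · intro x y hxy
    have sideP : ∀ p, (p = u ∨ p = a ∨ p ∈ A) → p ≠ b ∧ ¬G.Adj b p := by
      rintro p (rfl | rfl | hp)
      · exact ⟨C.hbu.symm, fun h => hub h.symm⟩
      · exact ⟨C.hne_ab, fun h => C.hab h.symm⟩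
      · exact ⟨C.A_ne_b hp, C.nadj_bA hp⟩
    rcases C.classify x with rfl | rfl | rfl | rfl | hx | hx <;>
      rcases C.classify y with rfl | rfl | rfl | rfl | hy | hy <;>
      try (first
        | exact (hxy.ne rfl).elim
        | exact absurd hxy hub
        | exact absurd hxy hva
        | exact absurd hxy C.hab
        | exact absurd hxy.symm hub
        | exact absurd hxy.symm hva
        | exact absurd hxy.symm C.hab
        | exact absurd hxy (C.nadj_aB ‹_›)
        | exact absurd hxy.symm (C.nadj_aB ‹_›)
        | exact absurd hxy (C.nadj_bA ‹_›)
        | exact absurd hxy.symm (C.nadj_bA ‹_›)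
        | (refine Or.inl ⟨sideP _ ?_, sideP _ ?_⟩ <;> tauto))
    -- leftovers, in goal order
    -- (u, v)
    · exact Or.inr ⟨Kuv, mKuv, Finset.mem_insert_self _ _,
        Finset.mem_insert_of_mem (Finset.mem_singleton_self _)⟩
    -- (u, Bs)
    · exact Or.inr ⟨SuB, mSuB, Finset.mem_insert_self _ _,
        Finset.mem_insert_of_mem (mem_nbrIn.mpr ⟨hy, hxy⟩)⟩
    -- (v, u)
    · exact Or.inr ⟨Kuv, mKuv, Finset.mem_insert_of_mem (Finset.mem_singleton_self _),
        Finset.mem_insert_self _ _⟩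
    -- (v, b)
    · exact Or.inr ⟨Qa, mQa, hvmemQa, hbmemQa⟩
    -- (v, A)
    · exact Or.inr ⟨SvA, mSvA, Finset.mem_insert_self _ _,
        Finset.mem_insert_of_mem (mem_nbrIn.mpr ⟨hy, hxy⟩)⟩
    -- (v, Bs)
    · exact Or.inr ⟨Qa, mQa, hvmemQa, hBmemQa y hy⟩
    -- (b, v)
    · exact Or.inr ⟨Qa, mQa, hbmemQa, hvmemQa⟩
    -- (b, Bs)
    · exact Or.inr ⟨Qa, mQa, hbmemQa, hBmemQa y hy⟩
    -- (A, v)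
    · exact Or.inr ⟨SvA, mSvA, Finset.mem_insert_of_mem (mem_nbrIn.mpr ⟨hx, hxy.symm⟩),
        Finset.mem_insert_self _ _⟩
    -- (A, Bs)
    · exact Or.inr ⟨insert x (nbrIn G x Bs), mxs x hx, Finset.mem_insert_self _ _,
        Finset.mem_insert_of_mem (mem_nbrIn.mpr ⟨hy, hxy⟩)⟩
    -- (Bs, u)
    · exact Or.inr ⟨SuB, mSuB, Finset.mem_insert_of_mem (mem_nbrIn.mpr ⟨hx, hxy.symm⟩),
        Finset.mem_insert_self _ _⟩
    -- (Bs, v)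
    · exact Or.inr ⟨Qa, mQa, hBmemQa x hx, hvmemQa⟩
    -- (Bs, b)
    · exact Or.inr ⟨Qa, mQa, hBmemQa x hx, hbmemQa⟩
    -- (Bs, A)
    · exact Or.inr ⟨insert y (nbrIn G y Bs), mxs y hy,
        Finset.mem_insert_of_mem (mem_nbrIn.mpr ⟨hx, hxy.symm⟩), Finset.mem_insert_self _ _⟩
    -- (Bs, Bs)
    · exact Or.inr ⟨Qa, mQa, hBmemQa x hx, hBmemQa y hy⟩

end Ctx


namespace Ctx

variable {V : Type*} [Fintype V] [DecidableEq V] {G : SimpleGraph V} {u v a b : V}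
  {A Bs : Finset V} (C : Ctx G u v a b A Bs)

include C

/-- Case L3 : `u` non-adjacent to `b`; `v` adjacent to both `a` and `b`. -/
lemma leafL3 (hub : ¬G.Adj u b) (hva : G.Adj v a) (hvb : G.Adj v b)
    (hdom : ∀ w, w ≠ u → w ≠ v → G.Adj w u ∨ G.Adj w v)
    {x0 y0 : V} (hx0 : x0 ∈ A) (hy0 : y0 ∈ Bs) (hx0y0 : G.Adj x0 y0) : Concl G := by
  classical
  have hua : G.Adj u a := C.adj_of_nonadj_b C.hbu.symm C.hne_ab C.hau.symm
    (fun h => hub h.symm) (fun h => C.hab h.symm)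
  set Qa : Finset V := nonNbrs G a with hQa
  set SvA : Finset V := insert v (insert a (nbrIn G v A)) with hSvA
  set SvB : Finset V := insert v (insert b (nbrIn G v Bs)) with hSvB
  set Kuva : Finset V := ({u, v, a} : Finset V) with hKuva
  have muK : u ∈ Kuva := Finset.mem_insert_self _ _
  have mvK : v ∈ Kuva := Finset.mem_insert_of_mem (Finset.mem_insert_self _ _)
  have maK : a ∈ Kuva :=
    Finset.mem_insert_of_mem (Finset.mem_insert_of_mem (Finset.mem_singleton_self _))
  have hbmemQa : b ∈ Qa := mem_nonNbrs.mpr ⟨C.hne_ab.symm, C.hab⟩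
  have hBmemQa : ∀ y ∈ Bs, y ∈ Qa := fun y hy => mem_nonNbrs.mpr ⟨C.B_ne_a hy, C.nadj_aB hy⟩
  have mv_SvA : v ∈ SvA := Finset.mem_insert_self _ _
  have ma_SvA : a ∈ SvA := Finset.mem_insert_of_mem (Finset.mem_insert_self _ _)
  have mA_SvA : ∀ x ∈ A, G.Adj v x → x ∈ SvA := fun x hx h =>
    Finset.mem_insert_of_mem (Finset.mem_insert_of_mem (mem_nbrIn.mpr ⟨hx, h⟩))
  have mv_SvB : v ∈ SvB := Finset.mem_insert_self _ _
  have mb_SvB : b ∈ SvB := Finset.mem_insert_of_mem (Finset.mem_insert_self _ _)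
  have mB_SvB : ∀ y ∈ Bs, G.Adj v y → y ∈ SvB := fun y hy h =>
    Finset.mem_insert_of_mem (Finset.mem_insert_of_mem (mem_nbrIn.mpr ⟨hy, h⟩))
  have sideP : ∀ p, (p = u ∨ p = a ∨ p ∈ A) → p ≠ b ∧ ¬G.Adj b p := by
    rintro p (rfl | rfl | hp)
    · exact ⟨C.hbu.symm, fun h => hub h.symm⟩
    · exact ⟨C.hne_ab, fun h => C.hab h.symm⟩
    · exact ⟨C.A_ne_b hp, C.nadj_bA hp⟩
  have cSvA : G.IsClique (↑SvA : Set V) := C.swapUV.star_uaA_clique hva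
  have cSvB : G.IsClique (↑SvB : Set V) := C.swapUV.swapAB.star_uaA_clique hvb
  have cKuva : G.IsClique (↑Kuva : Set V) := C.triple_clique C.huv hua hva
  by_cases hB2 : ∃ y1 ∈ Bs, y1 ≠ y0
  · -- |Bs| ≥ 2 : subcase 4i
    obtain ⟨y1, hy1, hy1ne⟩ := hB2
    set SuB : Finset V := insert u (nbrIn G u Bs) with hSuB
    have mu_SuB : u ∈ SuB := Finset.mem_insert_self _ _
    have mB_SuB : ∀ y ∈ Bs, G.Adj u y → y ∈ SuB := fun y hy h =>
      Finset.mem_insert_of_mem (mem_nbrIn.mpr ⟨hy, h⟩)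
    set Fr : Finset (Finset V) :=
      insert Qa (insert SuB (insert SvA (insert SvB (insert Kuva
        (A.image fun x => insert x (nbrIn G x Bs)))))) with hFr
    have mQa : Qa ∈ Fr := Finset.mem_insert_self _ _
    have mSuB : SuB ∈ Fr := Finset.mem_insert_of_mem (Finset.mem_insert_self _ _)
    have mSvA : SvA ∈ Fr :=
      Finset.mem_insert_of_mem (Finset.mem_insert_of_mem (Finset.mem_insert_self _ _))
    have mSvB : SvB ∈ Fr := Finset.mem_insert_of_mem (Finset.mem_insert_of_mem
      (Finset.mem_insert_of_mem (Finset.mem_insert_self _ _)))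
    have mKuva : Kuva ∈ Fr := Finset.mem_insert_of_mem (Finset.mem_insert_of_mem
      (Finset.mem_insert_of_mem (Finset.mem_insert_of_mem (Finset.mem_insert_self _ _))))
    have mxs : ∀ x ∈ A, insert x (nbrIn G x Bs) ∈ Fr := fun x hx =>
      Finset.mem_insert_of_mem (Finset.mem_insert_of_mem (Finset.mem_insert_of_mem
        (Finset.mem_insert_of_mem (Finset.mem_insert_of_mem (Finset.mem_image_of_mem _ hx)))))
    refine C.assemble Fr ?_ ?_ ?_
    · intro s hs
      rw [hFr] at hs
      rcases Finset.mem_insert.mp hs with rfl | hs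
      · exact C.swapAB.Qb_clique
      rcases Finset.mem_insert.mp hs with rfl | hs
      · exact C.star_uB_clique
      rcases Finset.mem_insert.mp hs with rfl | hs
      · exact cSvA
      rcases Finset.mem_insert.mp hs with rfl | hs
      · exact cSvB
      rcases Finset.mem_insert.mp hs with rfl | hs
      · exact cKuva
      obtain ⟨x, hx, rfl⟩ := Finset.mem_image.mp hs
      exact C.xslot_clique hx
    · have h1 : (A.image fun x => insert x (nbrIn G x Bs)).card ≤ A.card :=
        Finset.card_image_le
      have h2 : Fr.card ≤ A.card + 5 := by
        rw [hFr]
        have c1 := Finset.card_insert_le Qa (insert SuB (insert SvA (insert SvB (insert Kuva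
          (A.image fun x => insert x (nbrIn G x Bs))))))
        have c2 := Finset.card_insert_le SuB (insert SvA (insert SvB (insert Kuva
          (A.image fun x => insert x (nbrIn G x Bs)))))
        have c3 := Finset.card_insert_le SvA (insert SvB (insert Kuva
          (A.image fun x => insert x (nbrIn G x Bs))))
        have c4 := Finset.card_insert_le SvB (insert Kuva
          (A.image fun x => insert x (nbrIn G x Bs)))
        have c5 := Finset.card_insert_le Kuva (A.image fun x => insert x (nbrIn G x Bs))
        omega
      have h3 := C.budget
      have h4 : 2 ≤ Bs.card := Finset.one_lt_card.mpr ⟨y1, hy1, y0, hy0, hy1ne⟩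
      omega
    · clear_value Qa SvA SvB Kuva SuB Fr
      intro x y hxy
      rcases C.classify x with rfl | rfl | rfl | rfl | hx | hx <;>
        rcases C.classify y with rfl | rfl | rfl | rfl | hy | hy <;>
        try (first
          | exact (hxy.ne rfl).elim
          | exact absurd hxy hub
          | exact absurd hxy C.hab
          | exact absurd hxy.symm hub
          | exact absurd hxy.symm C.hab
          | exact absurd hxy (C.nadj_aB ‹_›)
          | exact absurd hxy.symm (C.nadj_aB ‹_›)
          | exact absurd hxy (C.nadj_bA ‹_›)
          | exact absurd hxy.symm (C.nadj_bA ‹_›)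
          | (refine Or.inl ⟨sideP _ ?_, sideP _ ?_⟩ <;> tauto))
      · exact Or.inr ⟨Kuva, mKuva, muK, mvK⟩
      · exact Or.inr ⟨SuB, mSuB, mu_SuB, mB_SuB y hy hxy⟩
      · exact Or.inr ⟨Kuva, mKuva, mvK, muK⟩
      · exact Or.inr ⟨Kuva, mKuva, mvK, maK⟩
      · exact Or.inr ⟨SvB, mSvB, mv_SvB, mb_SvB⟩
      · exact Or.inr ⟨SvA, mSvA, mv_SvA, mA_SvA y hy hxy⟩
      · exact Or.inr ⟨SvB, mSvB, mv_SvB, mB_SvB y hy hxy⟩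
      · exact Or.inr ⟨Kuva, mKuva, maK, mvK⟩
      · exact Or.inr ⟨SvB, mSvB, mb_SvB, mv_SvB⟩
      · exact Or.inr ⟨Qa, mQa, hbmemQa, hBmemQa y hy⟩
      · exact Or.inr ⟨SvA, mSvA, mA_SvA x hx hxy.symm, mv_SvA⟩
      · exact Or.inr ⟨insert x (nbrIn G x Bs), mxs x hx, Finset.mem_insert_self _ _,
          Finset.mem_insert_of_mem (mem_nbrIn.mpr ⟨hy, hxy⟩)⟩
      · exact Or.inr ⟨SuB, mSuB, mB_SuB x hx hxy.symm, mu_SuB⟩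
      · exact Or.inr ⟨SvB, mSvB, mB_SvB x hx hxy.symm, mv_SvB⟩
      · exact Or.inr ⟨Qa, mQa, hBmemQa x hx, hbmemQa⟩
      · exact Or.inr ⟨insert y (nbrIn G y Bs), mxs y hy,
          Finset.mem_insert_of_mem (mem_nbrIn.mpr ⟨hx, hxy.symm⟩), Finset.mem_insert_self _ _⟩
      · exact Or.inr ⟨Qa, mQa, hBmemQa x hx, hBmemQa y hy⟩
  · -- Bs = {y0}
    push_neg at hB2
    by_cases hvy0 : G.Adj v y0
    · -- subcase 4ii
      set SuB : Finset V := insert u (nbrIn G u Bs) with hSuB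
      have mu_SuB : u ∈ SuB := Finset.mem_insert_self _ _
      have mB_SuB : ∀ y ∈ Bs, G.Adj u y → y ∈ SuB := fun y hy h =>
        Finset.mem_insert_of_mem (mem_nbrIn.mpr ⟨hy, h⟩)
      have hymemSvB : ∀ y ∈ Bs, y ∈ SvB := by
        intro y hy
        have hyy : y = y0 := hB2 y hy
        subst hyy
        exact mB_SvB y hy hvy0
      set Fr : Finset (Finset V) :=
        insert SuB (insert SvA (insert SvB (insert Kuva
          (A.image fun x => insert x (nbrIn G x Bs))))) with hFr
      have mSuB : SuB ∈ Fr := Finset.mem_insert_self _ _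
      have mSvA : SvA ∈ Fr := Finset.mem_insert_of_mem (Finset.mem_insert_self _ _)
      have mSvB : SvB ∈ Fr :=
        Finset.mem_insert_of_mem (Finset.mem_insert_of_mem (Finset.mem_insert_self _ _))
      have mKuva : Kuva ∈ Fr := Finset.mem_insert_of_mem (Finset.mem_insert_of_mem
        (Finset.mem_insert_of_mem (Finset.mem_insert_self _ _)))
      have mxs : ∀ x ∈ A, insert x (nbrIn G x Bs) ∈ Fr := fun x hx =>
        Finset.mem_insert_of_mem (Finset.mem_insert_of_mem (Finset.mem_insert_of_mem
          (Finset.mem_insert_of_mem (Finset.mem_image_of_mem _ hx))))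
      refine C.assemble Fr ?_ ?_ ?_
      · intro s hs
        rw [hFr] at hs
        rcases Finset.mem_insert.mp hs with rfl | hs
        · exact C.star_uB_clique
        rcases Finset.mem_insert.mp hs with rfl | hs
        · exact cSvA
        rcases Finset.mem_insert.mp hs with rfl | hs
        · exact cSvB
        rcases Finset.mem_insert.mp hs with rfl | hs
        · exact cKuva
        obtain ⟨x, hx, rfl⟩ := Finset.mem_image.mp hs
        exact C.xslot_clique hx
      · have h1 : (A.image fun x => insert x (nbrIn G x Bs)).card ≤ A.card :=
          Finset.card_image_le
        have h2 : Fr.card ≤ A.card + 4 := by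
          rw [hFr]
          have c1 := Finset.card_insert_le SuB (insert SvA (insert SvB (insert Kuva
            (A.image fun x => insert x (nbrIn G x Bs)))))
          have c2 := Finset.card_insert_le SvA (insert SvB (insert Kuva
            (A.image fun x => insert x (nbrIn G x Bs))))
          have c3 := Finset.card_insert_le SvB (insert Kuva
            (A.image fun x => insert x (nbrIn G x Bs)))
          have c4 := Finset.card_insert_le Kuva (A.image fun x => insert x (nbrIn G x Bs))
          omega
        have h3 := C.budget
        have h4 : 1 ≤ Bs.card := Finset.card_pos.mpr ⟨y0, hy0⟩
        omega
      · clear_value Qa SvA SvB Kuva SuB Fr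
        intro x y hxy
        rcases C.classify x with rfl | rfl | rfl | rfl | hx | hx <;>
          rcases C.classify y with rfl | rfl | rfl | rfl | hy | hy <;>
          try (first
            | exact (hxy.ne rfl).elim
            | exact absurd hxy hub
            | exact absurd hxy C.hab
            | exact absurd hxy.symm hub
            | exact absurd hxy.symm C.hab
            | exact absurd hxy (C.nadj_aB ‹_›)
            | exact absurd hxy.symm (C.nadj_aB ‹_›)
            | exact absurd hxy (C.nadj_bA ‹_›)
            | exact absurd hxy.symm (C.nadj_bA ‹_›)
            | (refine Or.inl ⟨sideP _ ?_, sideP _ ?_⟩ <;> tauto))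
        · exact Or.inr ⟨Kuva, mKuva, muK, mvK⟩
        · exact Or.inr ⟨SuB, mSuB, mu_SuB, mB_SuB y hy hxy⟩
        · exact Or.inr ⟨Kuva, mKuva, mvK, muK⟩
        · exact Or.inr ⟨Kuva, mKuva, mvK, maK⟩
        · exact Or.inr ⟨SvB, mSvB, mv_SvB, mb_SvB⟩
        · exact Or.inr ⟨SvA, mSvA, mv_SvA, mA_SvA y hy hxy⟩
        · exact Or.inr ⟨SvB, mSvB, mv_SvB, hymemSvB y hy⟩
        · exact Or.inr ⟨Kuva, mKuva, maK, mvK⟩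
        · exact Or.inr ⟨SvB, mSvB, mb_SvB, mv_SvB⟩
        · exact Or.inr ⟨SvB, mSvB, mb_SvB, hymemSvB y hy⟩
        · exact Or.inr ⟨SvA, mSvA, mA_SvA x hx hxy.symm, mv_SvA⟩
        · exact Or.inr ⟨insert x (nbrIn G x Bs), mxs x hx, Finset.mem_insert_self _ _,
            Finset.mem_insert_of_mem (mem_nbrIn.mpr ⟨hy, hxy⟩)⟩
        · exact Or.inr ⟨SuB, mSuB, mB_SuB x hx hxy.symm, mu_SuB⟩
        · exact Or.inr ⟨SvB, mSvB, hymemSvB x hx, mv_SvB⟩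
        · exact Or.inr ⟨SvB, mSvB, hymemSvB x hx, mb_SvB⟩
        · exact Or.inr ⟨insert y (nbrIn G y Bs), mxs y hy,
            Finset.mem_insert_of_mem (mem_nbrIn.mpr ⟨hx, hxy.symm⟩), Finset.mem_insert_self _ _⟩
        · exact absurd ((hB2 x hx) ▸ (hB2 y hy) ▸ hxy) G.irrefl
    · -- subcase 4iii
      have huy0 : G.Adj u y0 := by
        rcases hdom y0 (C.B_ne_u hy0) (C.B_ne_v hy0) with h | h
        · exact h.symm
        · exact absurd h.symm hvy0
      have huB : ∀ y ∈ Bs, G.Adj u y := fun y hy => (hB2 y hy) ▸ huy0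
      have hux : ∀ x ∈ A, G.Adj u x := fun x hx =>
        C.adj_of_nonadj_b C.hbu.symm (C.A_ne_b hx) (fun h => C.A_ne_u hx h.symm)
          (fun h => hub h.symm) (C.nadj_bA hx)
      set Sx0 : Finset V := insert x0 (insert u (nbrIn G x0 Bs)) with hSx0
      have huSx0 : u ∈ Sx0 := Finset.mem_insert_of_mem (Finset.mem_insert_self _ _)
      have hy0Sx0 : y0 ∈ Sx0 :=
        Finset.mem_insert_of_mem (Finset.mem_insert_of_mem (mem_nbrIn.mpr ⟨hy0, hx0y0⟩))
      set Fr : Finset (Finset V) :=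
        insert Qa (insert SvA (insert SvB (insert Kuva
          (A.image fun x => insert x (insert u (nbrIn G x Bs)))))) with hFr
      have mQa : Qa ∈ Fr := Finset.mem_insert_self _ _
      have mSvA : SvA ∈ Fr := Finset.mem_insert_of_mem (Finset.mem_insert_self _ _)
      have mSvB : SvB ∈ Fr :=
        Finset.mem_insert_of_mem (Finset.mem_insert_of_mem (Finset.mem_insert_self _ _))
      have mKuva : Kuva ∈ Fr := Finset.mem_insert_of_mem (Finset.mem_insert_of_mem
        (Finset.mem_insert_of_mem (Finset.mem_insert_self _ _)))
      have mxs : ∀ x ∈ A, insert x (insert u (nbrIn G x Bs)) ∈ Fr := fun x hx =>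
        Finset.mem_insert_of_mem (Finset.mem_insert_of_mem (Finset.mem_insert_of_mem
          (Finset.mem_insert_of_mem (Finset.mem_image_of_mem _ hx))))
      have mSx0 : Sx0 ∈ Fr := mxs x0 hx0
      refine C.assemble Fr ?_ ?_ ?_
      · intro s hs
        rw [hFr] at hs
        rcases Finset.mem_insert.mp hs with rfl | hs
        · exact C.swapAB.Qb_clique
        rcases Finset.mem_insert.mp hs with rfl | hs
        · exact cSvA
        rcases Finset.mem_insert.mp hs with rfl | hs
        · exact cSvB
        rcases Finset.mem_insert.mp hs with rfl | hs
        · exact cKuva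
        obtain ⟨x, hx, rfl⟩ := Finset.mem_image.mp hs
        exact C.xslot2_clique hx (hux x hx) huB
      · have h1 : (A.image fun x => insert x (insert u (nbrIn G x Bs))).card ≤ A.card :=
          Finset.card_image_le
        have h2 : Fr.card ≤ A.card + 4 := by
          rw [hFr]
          have c1 := Finset.card_insert_le Qa (insert SvA (insert SvB (insert Kuva
            (A.image fun x => insert x (insert u (nbrIn G x Bs))))))
          have c2 := Finset.card_insert_le SvA (insert SvB (insert Kuva
            (A.image fun x => insert x (insert u (nbrIn G x Bs)))))
          have c3 := Finset.card_insert_le SvB (insert Kuva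
            (A.image fun x => insert x (insert u (nbrIn G x Bs))))
          have c4 := Finset.card_insert_le Kuva
            (A.image fun x => insert x (insert u (nbrIn G x Bs)))
          omega
        have h3 := C.budget
        have h4 : 1 ≤ Bs.card := Finset.card_pos.mpr ⟨y0, hy0⟩
        omega
      · clear_value Qa SvA SvB Kuva Sx0 Fr
        intro x y hxy
        rcases C.classify x with rfl | rfl | rfl | rfl | hx | hx <;>
          rcases C.classify y with rfl | rfl | rfl | rfl | hy | hy <;>
          try (first
            | exact (hxy.ne rfl).elim
            | exact absurd hxy hub
            | exact absurd hxy C.hab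
            | exact absurd hxy.symm hub
            | exact absurd hxy.symm C.hab
            | exact absurd hxy (C.nadj_aB ‹_›)
            | exact absurd hxy.symm (C.nadj_aB ‹_›)
            | exact absurd hxy (C.nadj_bA ‹_›)
            | exact absurd hxy.symm (C.nadj_bA ‹_›)
            | (refine Or.inl ⟨sideP _ ?_, sideP _ ?_⟩ <;> tauto))
        -- (u, v)
        · exact Or.inr ⟨Kuva, mKuva, muK, mvK⟩
        -- (u, Bs)
        · exact Or.inr ⟨Sx0, mSx0, huSx0, by rw [hB2 y hy]; exact hy0Sx0⟩
        -- (v, u)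
        · exact Or.inr ⟨Kuva, mKuva, mvK, muK⟩
        -- (v, a)
        · exact Or.inr ⟨Kuva, mKuva, mvK, maK⟩
        -- (v, b)
        · exact Or.inr ⟨SvB, mSvB, mv_SvB, mb_SvB⟩
        -- (v, A)
        · exact Or.inr ⟨SvA, mSvA, mv_SvA, mA_SvA y hy hxy⟩
        -- (v, Bs)
        · exact absurd ((hB2 y hy) ▸ hxy) hvy0
        -- (a, v)
        · exact Or.inr ⟨Kuva, mKuva, maK, mvK⟩
        -- (b, v)
        · exact Or.inr ⟨SvB, mSvB, mb_SvB, mv_SvB⟩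
        -- (b, Bs)
        · exact Or.inr ⟨Qa, mQa, hbmemQa, hBmemQa y hy⟩
        -- (A, v)
        · exact Or.inr ⟨SvA, mSvA, mA_SvA x hx hxy.symm, mv_SvA⟩
        -- (A, Bs)
        · exact Or.inr ⟨insert x (insert u (nbrIn G x Bs)), mxs x hx,
            Finset.mem_insert_self _ _, Finset.mem_insert_of_mem
            (Finset.mem_insert_of_mem (mem_nbrIn.mpr ⟨hy, hxy⟩))⟩
        -- (Bs, u)
        · exact Or.inr ⟨Sx0, mSx0, by rw [hB2 x hx]; exact hy0Sx0, huSx0⟩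
        -- (Bs, v)
        · exact absurd ((hB2 x hx) ▸ hxy.symm) hvy0
        -- (Bs, b)
        · exact Or.inr ⟨Qa, mQa, hBmemQa x hx, hbmemQa⟩
        -- (Bs, A)
        · exact Or.inr ⟨insert y (insert u (nbrIn G y Bs)), mxs y hy,
            Finset.mem_insert_of_mem (Finset.mem_insert_of_mem
              (mem_nbrIn.mpr ⟨hx, hxy.symm⟩)), Finset.mem_insert_self _ _⟩
        -- (Bs, Bs)
        · exact absurd ((hB2 x hx) ▸ (hB2 y hy) ▸ hxy) G.irrefl

end Ctx


namespace Ctx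

variable {V : Type*} [Fintype V] [DecidableEq V] {G : SimpleGraph V} {u v a b : V}
  {A Bs : Finset V} (C : Ctx G u v a b A Bs)

include C

/-- L4 subcase (a): some `y0'` in `Bs` is adjacent to neither `u` nor `v`. -/
lemma leafL4a (hua : G.Adj u a) (hub : G.Adj u b) (hva : G.Adj v a) (hvb : G.Adj v b)
    {y0' : V} (hy0' : y0' ∈ Bs) (hnu : ¬G.Adj u y0') (hnv : ¬G.Adj v y0') : Concl G := by
  classical
  set Qa : Finset V := nonNbrs G a with hQa
  have hbmemQa : b ∈ Qa := mem_nonNbrs.mpr ⟨C.hne_ab.symm, C.hab⟩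
  have hBmemQa : ∀ y ∈ Bs, y ∈ Qa := fun y hy => mem_nonNbrs.mpr ⟨C.B_ne_a hy, C.nadj_aB hy⟩
  set SuA : Finset V := insert u (insert a (nbrIn G u A)) with hSuA
  set SvA : Finset V := insert v (insert a (nbrIn G v A)) with hSvA
  set Kuvb : Finset V := ({u, v, b} : Finset V) with hKuvb
  have mu_SuA : u ∈ SuA := Finset.mem_insert_self _ _
  have ma_SuA : a ∈ SuA := Finset.mem_insert_of_mem (Finset.mem_insert_self _ _)
  have mA_SuA : ∀ x ∈ A, G.Adj u x → x ∈ SuA := fun x hx h =>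
    Finset.mem_insert_of_mem (Finset.mem_insert_of_mem (mem_nbrIn.mpr ⟨hx, h⟩))
  have mv_SvA : v ∈ SvA := Finset.mem_insert_self _ _
  have ma_SvA : a ∈ SvA := Finset.mem_insert_of_mem (Finset.mem_insert_self _ _)
  have mA_SvA : ∀ x ∈ A, G.Adj v x → x ∈ SvA := fun x hx h =>
    Finset.mem_insert_of_mem (Finset.mem_insert_of_mem (mem_nbrIn.mpr ⟨hx, h⟩))
  have muK : u ∈ Kuvb := Finset.mem_insert_self _ _
  have mvK : v ∈ Kuvb := Finset.mem_insert_of_mem (Finset.mem_insert_self _ _)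
  have mbK : b ∈ Kuvb :=
    Finset.mem_insert_of_mem (Finset.mem_insert_of_mem (Finset.mem_singleton_self _))
  set Fr : Finset (Finset V) :=
    insert Qa (insert SuA (insert SvA (insert Kuvb
      ((A.image fun x => insert x (nbrIn G x Bs)) ∪
       ((Bs.erase y0').image fun y => insert y (insert b (nbrIn G y ({u, v} : Finset V))))))))
    with hFr
  have mQa : Qa ∈ Fr := Finset.mem_insert_self _ _
  have mSuA : SuA ∈ Fr := Finset.mem_insert_of_mem (Finset.mem_insert_self _ _)
  have mSvA : SvA ∈ Fr :=
    Finset.mem_insert_of_mem (Finset.mem_insert_of_mem (Finset.mem_insert_self _ _))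
  have mKuvb : Kuvb ∈ Fr := Finset.mem_insert_of_mem (Finset.mem_insert_of_mem
    (Finset.mem_insert_of_mem (Finset.mem_insert_self _ _)))
  have mxs : ∀ x ∈ A, insert x (nbrIn G x Bs) ∈ Fr := fun x hx =>
    Finset.mem_insert_of_mem (Finset.mem_insert_of_mem (Finset.mem_insert_of_mem
      (Finset.mem_insert_of_mem (Finset.mem_union_left _ (Finset.mem_image_of_mem _ hx)))))
  have mTy : ∀ y ∈ Bs, y ≠ y0' →
      insert y (insert b (nbrIn G y ({u, v} : Finset V))) ∈ Fr := fun y hy hne =>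
    Finset.mem_insert_of_mem (Finset.mem_insert_of_mem (Finset.mem_insert_of_mem
      (Finset.mem_insert_of_mem (Finset.mem_union_right _
        (Finset.mem_image_of_mem _ (Finset.mem_erase.mpr ⟨hne, hy⟩))))))
  have covUB : ∀ y ∈ Bs, G.Adj u y → ∃ s ∈ Fr, u ∈ s ∧ y ∈ s := by
    intro y hy hadj
    have hne : y ≠ y0' := fun h => hnu (h ▸ hadj)
    exact ⟨_, mTy y hy hne, Finset.mem_insert_of_mem (Finset.mem_insert_of_mem
      (mem_nbrIn.mpr ⟨Finset.mem_insert_self _ _, hadj.symm⟩)), Finset.mem_insert_self _ _⟩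
  have covVB : ∀ y ∈ Bs, G.Adj v y → ∃ s ∈ Fr, v ∈ s ∧ y ∈ s := by
    intro y hy hadj
    have hne : y ≠ y0' := fun h => hnv (h ▸ hadj)
    exact ⟨_, mTy y hy hne, Finset.mem_insert_of_mem (Finset.mem_insert_of_mem
      (mem_nbrIn.mpr ⟨Finset.mem_insert_of_mem (Finset.mem_singleton_self _), hadj.symm⟩)),
      Finset.mem_insert_self _ _⟩
  have sideP : ∀ p, (p = a ∨ p ∈ A) → p ≠ b ∧ ¬G.Adj b p := by
    rintro p (rfl | hp)
    · exact ⟨C.hne_ab, fun h => C.hab h.symm⟩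
    · exact ⟨C.A_ne_b hp, C.nadj_bA hp⟩
  refine C.assemble Fr ?_ ?_ ?_
  · intro s hs
    rw [hFr] at hs
    rcases Finset.mem_insert.mp hs with rfl | hs
    · exact C.swapAB.Qb_clique
    rcases Finset.mem_insert.mp hs with rfl | hs
    · exact C.star_uaA_clique hua
    rcases Finset.mem_insert.mp hs with rfl | hs
    · exact C.swapUV.star_uaA_clique hva
    rcases Finset.mem_insert.mp hs with rfl | hs
    · exact C.triple_clique C.huv hub hvb
    rcases Finset.mem_union.mp hs with hs | hs
    · obtain ⟨x, hx, rfl⟩ := Finset.mem_image.mp hs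
      exact C.xslot_clique hx
    · obtain ⟨y, hy, rfl⟩ := Finset.mem_image.mp hs
      exact C.Ty_clique (Finset.mem_of_mem_erase hy) hub hvb
  · have h1 : ((A.image fun x => insert x (nbrIn G x Bs)) ∪
        ((Bs.erase y0').image fun y =>
          insert y (insert b (nbrIn G y ({u, v} : Finset V))))).card
        ≤ A.card + (Bs.card - 1) := by
      have i1 : (A.image fun x => insert x (nbrIn G x Bs)).card ≤ A.card :=
        Finset.card_image_le
      have i2 : ((Bs.erase y0').image fun y =>
          insert y (insert b (nbrIn G y ({u, v} : Finset V)))).card ≤ Bs.card - 1 := by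
        have := Finset.card_image_le (s := Bs.erase y0')
          (f := fun y => insert y (insert b (nbrIn G y ({u, v} : Finset V))))
        rw [Finset.card_erase_of_mem hy0'] at this
        exact this
      have := Finset.card_union_le (A.image fun x => insert x (nbrIn G x Bs))
        ((Bs.erase y0').image fun y => insert y (insert b (nbrIn G y ({u, v} : Finset V))))
      omega
    have h2 : Fr.card ≤ (A.card + (Bs.card - 1)) + 4 := by
      rw [hFr]
      have c1 := Finset.card_insert_le Qa (insert SuA (insert SvA (insert Kuvb
        ((A.image fun x => insert x (nbrIn G x Bs)) ∪
         ((Bs.erase y0').image fun y => insert y (insert b (nbrIn G y ({u, v} : Finset V))))))))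
      have c2 := Finset.card_insert_le SuA (insert SvA (insert Kuvb
        ((A.image fun x => insert x (nbrIn G x Bs)) ∪
         ((Bs.erase y0').image fun y => insert y (insert b (nbrIn G y ({u, v} : Finset V)))))))
      have c3 := Finset.card_insert_le SvA (insert Kuvb
        ((A.image fun x => insert x (nbrIn G x Bs)) ∪
         ((Bs.erase y0').image fun y => insert y (insert b (nbrIn G y ({u, v} : Finset V))))))
      have c4 := Finset.card_insert_le Kuvb
        ((A.image fun x => insert x (nbrIn G x Bs)) ∪
         ((Bs.erase y0').image fun y => insert y (insert b (nbrIn G y ({u, v} : Finset V)))))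
      omega
    have h3 := C.budget
    have h4 : 1 ≤ Bs.card := Finset.card_pos.mpr ⟨y0', hy0'⟩
    omega
  · clear_value Qa SuA SvA Kuvb Fr
    intro x y hxy
    rcases C.classify x with rfl | rfl | rfl | rfl | hx | hx <;>
      rcases C.classify y with rfl | rfl | rfl | rfl | hy | hy <;>
      try (first
        | exact (hxy.ne rfl).elim
        | exact absurd hxy C.hab
        | exact absurd hxy.symm C.hab
        | exact absurd hxy (C.nadj_aB ‹_›)
        | exact absurd hxy.symm (C.nadj_aB ‹_›)
        | exact absurd hxy (C.nadj_bA ‹_›)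
        | exact absurd hxy.symm (C.nadj_bA ‹_›)
        | (refine Or.inl ⟨sideP _ ?_, sideP _ ?_⟩ <;> tauto))
    -- (u, v)
    · exact Or.inr ⟨Kuvb, mKuvb, muK, mvK⟩
    -- (u, a)
    · exact Or.inr ⟨SuA, mSuA, mu_SuA, ma_SuA⟩
    -- (u, b)
    · exact Or.inr ⟨Kuvb, mKuvb, muK, mbK⟩
    -- (u, A)
    · exact Or.inr ⟨SuA, mSuA, mu_SuA, mA_SuA y hy hxy⟩
    -- (u, Bs)
    · exact Or.inr (covUB y hy hxy)
    -- (v, u)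
    · exact Or.inr ⟨Kuvb, mKuvb, mvK, muK⟩
    -- (v, a)
    · exact Or.inr ⟨SvA, mSvA, mv_SvA, ma_SvA⟩
    -- (v, b)
    · exact Or.inr ⟨Kuvb, mKuvb, mvK, mbK⟩
    -- (v, A)
    · exact Or.inr ⟨SvA, mSvA, mv_SvA, mA_SvA y hy hxy⟩
    -- (v, Bs)
    · exact Or.inr (covVB y hy hxy)
    -- (a, u)
    · exact Or.inr ⟨SuA, mSuA, ma_SuA, mu_SuA⟩
    -- (a, v)
    · exact Or.inr ⟨SvA, mSvA, ma_SvA, mv_SvA⟩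
    -- (b, u)
    · exact Or.inr ⟨Kuvb, mKuvb, mbK, muK⟩
    -- (b, v)
    · exact Or.inr ⟨Kuvb, mKuvb, mbK, mvK⟩
    -- (b, Bs)
    · exact Or.inr ⟨Qa, mQa, hbmemQa, hBmemQa y hy⟩
    -- (A, u)
    · exact Or.inr ⟨SuA, mSuA, mA_SuA x hx hxy.symm, mu_SuA⟩
    -- (A, v)
    · exact Or.inr ⟨SvA, mSvA, mA_SvA x hx hxy.symm, mv_SvA⟩
    -- (A, Bs)
    · exact Or.inr ⟨insert x (nbrIn G x Bs), mxs x hx, Finset.mem_insert_self _ _,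
        Finset.mem_insert_of_mem (mem_nbrIn.mpr ⟨hy, hxy⟩)⟩
    -- (Bs, u)
    · obtain ⟨s, hs, h1, h2⟩ := covUB x hx hxy.symm
      exact Or.inr ⟨s, hs, h2, h1⟩
    -- (Bs, v)
    · obtain ⟨s, hs, h1, h2⟩ := covVB x hx hxy.symm
      exact Or.inr ⟨s, hs, h2, h1⟩
    -- (Bs, b)
    · exact Or.inr ⟨Qa, mQa, hBmemQa x hx, hbmemQa⟩
    -- (Bs, A)
    · exact Or.inr ⟨insert y (nbrIn G y Bs), mxs y hy,
        Finset.mem_insert_of_mem (mem_nbrIn.mpr ⟨hx, hxy.symm⟩), Finset.mem_insert_self _ _⟩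
    -- (Bs, Bs)
    · exact Or.inr ⟨Qa, mQa, hBmemQa x hx, hBmemQa y hy⟩

end Ctx

namespace Ctx

variable {V : Type*} [Fintype V] [DecidableEq V] {G : SimpleGraph V} {u v a b : V}
  {A Bs : Finset V} (C : Ctx G u v a b A Bs)

include C

/-- L4 subcase (b): `u` adjacent to no vertex of `Bs`, `v` adjacent to all of `Bs`. -/
lemma leafL4b (hua : G.Adj u a) (hub : G.Adj u b) (hva : G.Adj v a) (hvb : G.Adj v b)
    (huB : ∀ y ∈ Bs, ¬G.Adj u y) (hvB : ∀ y ∈ Bs, G.Adj v y) : Concl G := by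
  classical
  set SuA : Finset V := insert u (insert a (nbrIn G u A)) with hSuA
  set SvA : Finset V := insert v (insert a (nbrIn G v A)) with hSvA
  set Kuvb : Finset V := ({u, v, b} : Finset V) with hKuvb
  have mu_SuA : u ∈ SuA := Finset.mem_insert_self _ _
  have ma_SuA : a ∈ SuA := Finset.mem_insert_of_mem (Finset.mem_insert_self _ _)
  have mA_SuA : ∀ x ∈ A, G.Adj u x → x ∈ SuA := fun x hx h =>
    Finset.mem_insert_of_mem (Finset.mem_insert_of_mem (mem_nbrIn.mpr ⟨hx, h⟩))
  have mv_SvA : v ∈ SvA := Finset.mem_insert_self _ _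
  have ma_SvA : a ∈ SvA := Finset.mem_insert_of_mem (Finset.mem_insert_self _ _)
  have mA_SvA : ∀ x ∈ A, G.Adj v x → x ∈ SvA := fun x hx h =>
    Finset.mem_insert_of_mem (Finset.mem_insert_of_mem (mem_nbrIn.mpr ⟨hx, h⟩))
  have muK : u ∈ Kuvb := Finset.mem_insert_self _ _
  have mvK : v ∈ Kuvb := Finset.mem_insert_of_mem (Finset.mem_insert_self _ _)
  have mbK : b ∈ Kuvb :=
    Finset.mem_insert_of_mem (Finset.mem_insert_of_mem (Finset.mem_singleton_self _))
  set Fr : Finset (Finset V) :=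
    insert SuA (insert SvA (insert Kuvb
      ((A.image fun x => insert x (nbrIn G x Bs)) ∪
       (Bs.image fun y => insert y (insert b (insert v (nbrIn G y Bs))))))) with hFr
  have mSuA : SuA ∈ Fr := Finset.mem_insert_self _ _
  have mSvA : SvA ∈ Fr := Finset.mem_insert_of_mem (Finset.mem_insert_self _ _)
  have mKuvb : Kuvb ∈ Fr :=
    Finset.mem_insert_of_mem (Finset.mem_insert_of_mem (Finset.mem_insert_self _ _))
  have mxs : ∀ x ∈ A, insert x (nbrIn G x Bs) ∈ Fr := fun x hx =>
    Finset.mem_insert_of_mem (Finset.mem_insert_of_mem (Finset.mem_insert_of_mem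
      (Finset.mem_union_left _ (Finset.mem_image_of_mem _ hx))))
  have mTy : ∀ y ∈ Bs, insert y (insert b (insert v (nbrIn G y Bs))) ∈ Fr := fun y hy =>
    Finset.mem_insert_of_mem (Finset.mem_insert_of_mem (Finset.mem_insert_of_mem
      (Finset.mem_union_right _ (Finset.mem_image_of_mem _ hy))))
  have covVB : ∀ y ∈ Bs, ∃ s ∈ Fr, v ∈ s ∧ y ∈ s := fun y hy =>
    ⟨_, mTy y hy, Finset.mem_insert_of_mem (Finset.mem_insert_of_mem
      (Finset.mem_insert_self _ _)), Finset.mem_insert_self _ _⟩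
  have covBB : ∀ y ∈ Bs, ∃ s ∈ Fr, b ∈ s ∧ y ∈ s := fun y hy =>
    ⟨_, mTy y hy, Finset.mem_insert_of_mem (Finset.mem_insert_self _ _),
      Finset.mem_insert_self _ _⟩
  have covBB2 : ∀ x ∈ Bs, ∀ y ∈ Bs, G.Adj x y → ∃ s ∈ Fr, x ∈ s ∧ y ∈ s := fun x hx y hy h =>
    ⟨_, mTy x hx, Finset.mem_insert_self _ _, Finset.mem_insert_of_mem
      (Finset.mem_insert_of_mem (Finset.mem_insert_of_mem (mem_nbrIn.mpr ⟨hy, h⟩)))⟩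
  have sideP : ∀ p, (p = a ∨ p ∈ A) → p ≠ b ∧ ¬G.Adj b p := by
    rintro p (rfl | hp)
    · exact ⟨C.hne_ab, fun h => C.hab h.symm⟩
    · exact ⟨C.A_ne_b hp, C.nadj_bA hp⟩
  refine C.assemble Fr ?_ ?_ ?_
  · intro s hs
    rw [hFr] at hs
    rcases Finset.mem_insert.mp hs with rfl | hs
    · exact C.star_uaA_clique hua
    rcases Finset.mem_insert.mp hs with rfl | hs
    · exact C.swapUV.star_uaA_clique hva
    rcases Finset.mem_insert.mp hs with rfl | hs
    · exact C.triple_clique C.huv hub hvb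
    rcases Finset.mem_union.mp hs with hs | hs
    · obtain ⟨x, hx, rfl⟩ := Finset.mem_image.mp hs
      exact C.xslot_clique hx
    · obtain ⟨y, hy, rfl⟩ := Finset.mem_image.mp hs
      exact C.Tprime_clique hy hvb hvB
  · have i1 : (A.image fun x => insert x (nbrIn G x Bs)).card ≤ A.card :=
      Finset.card_image_le
    have i2 : (Bs.image fun y => insert y (insert b (insert v (nbrIn G y Bs)))).card
        ≤ Bs.card := Finset.card_image_le
    have i3 := Finset.card_union_le (A.image fun x => insert x (nbrIn G x Bs))
      (Bs.image fun y => insert y (insert b (insert v (nbrIn G y Bs))))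
    have h2 : Fr.card ≤ (A.card + Bs.card) + 3 := by
      rw [hFr]
      have c1 := Finset.card_insert_le SuA (insert SvA (insert Kuvb
        ((A.image fun x => insert x (nbrIn G x Bs)) ∪
         (Bs.image fun y => insert y (insert b (insert v (nbrIn G y Bs)))))))
      have c2 := Finset.card_insert_le SvA (insert Kuvb
        ((A.image fun x => insert x (nbrIn G x Bs)) ∪
         (Bs.image fun y => insert y (insert b (insert v (nbrIn G y Bs))))))
      have c3 := Finset.card_insert_le Kuvb
        ((A.image fun x => insert x (nbrIn G x Bs)) ∪
         (Bs.image fun y => insert y (insert b (insert v (nbrIn G y Bs)))))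
      omega
    have h3 := C.budget
    omega
  · clear_value SuA SvA Kuvb Fr
    intro x y hxy
    rcases C.classify x with rfl | rfl | rfl | rfl | hx | hx <;>
      rcases C.classify y with rfl | rfl | rfl | rfl | hy | hy <;>
      try (first
        | exact (hxy.ne rfl).elim
        | exact absurd hxy C.hab
        | exact absurd hxy.symm C.hab
        | exact absurd hxy (C.nadj_aB ‹_›)
        | exact absurd hxy.symm (C.nadj_aB ‹_›)
        | exact absurd hxy (C.nadj_bA ‹_›)
        | exact absurd hxy.symm (C.nadj_bA ‹_›)
        | exact absurd hxy (huB _ ‹_›)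
        | exact absurd hxy.symm (huB _ ‹_›)
        | (refine Or.inl ⟨sideP _ ?_, sideP _ ?_⟩ <;> tauto))
    -- (u, v)
    · exact Or.inr ⟨Kuvb, mKuvb, muK, mvK⟩
    -- (u, a)
    · exact Or.inr ⟨SuA, mSuA, mu_SuA, ma_SuA⟩
    -- (u, b)
    · exact Or.inr ⟨Kuvb, mKuvb, muK, mbK⟩
    -- (u, A)
    · exact Or.inr ⟨SuA, mSuA, mu_SuA, mA_SuA y hy hxy⟩
    -- (v, u)
    · exact Or.inr ⟨Kuvb, mKuvb, mvK, muK⟩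
    -- (v, a)
    · exact Or.inr ⟨SvA, mSvA, mv_SvA, ma_SvA⟩
    -- (v, b)
    · exact Or.inr ⟨Kuvb, mKuvb, mvK, mbK⟩
    -- (v, A)
    · exact Or.inr ⟨SvA, mSvA, mv_SvA, mA_SvA y hy hxy⟩
    -- (v, Bs)
    · exact Or.inr (covVB y hy)
    -- (a, u)
    · exact Or.inr ⟨SuA, mSuA, ma_SuA, mu_SuA⟩
    -- (a, v)
    · exact Or.inr ⟨SvA, mSvA, ma_SvA, mv_SvA⟩
    -- (b, u)
    · exact Or.inr ⟨Kuvb, mKuvb, mbK, muK⟩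
    -- (b, v)
    · exact Or.inr ⟨Kuvb, mKuvb, mbK, mvK⟩
    -- (b, Bs)
    · exact Or.inr (covBB y hy)
    -- (A, u)
    · exact Or.inr ⟨SuA, mSuA, mA_SuA x hx hxy.symm, mu_SuA⟩
    -- (A, v)
    · exact Or.inr ⟨SvA, mSvA, mA_SvA x hx hxy.symm, mv_SvA⟩
    -- (A, Bs)
    · exact Or.inr ⟨insert x (nbrIn G x Bs), mxs x hx, Finset.mem_insert_self _ _,
        Finset.mem_insert_of_mem (mem_nbrIn.mpr ⟨hy, hxy⟩)⟩
    -- (Bs, v)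
    · obtain ⟨s, hs, h1, h2⟩ := covVB x hx
      exact Or.inr ⟨s, hs, h2, h1⟩
    -- (Bs, b)
    · obtain ⟨s, hs, h1, h2⟩ := covBB x hx
      exact Or.inr ⟨s, hs, h2, h1⟩
    -- (Bs, A)
    · exact Or.inr ⟨insert y (nbrIn G y Bs), mxs y hy,
        Finset.mem_insert_of_mem (mem_nbrIn.mpr ⟨hx, hxy.symm⟩), Finset.mem_insert_self _ _⟩
    -- (Bs, Bs)
    · exact Or.inr (covBB2 x hx y hy hxy)

end Ctx

namespace Ctx

variable {V : Type*} [Fintype V] [DecidableEq V] {G : SimpleGraph V} {u v a b : V}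
  {A Bs : Finset V} (C : Ctx G u v a b A Bs)

include C

/-- L4 subcase (c): some common `B`-neighbour of `u` and `v`, plus individual ones. -/
lemma leafL4c (hua : G.Adj u a) (hub : G.Adj u b) (hva : G.Adj v a) (hvb : G.Adj v b)
    {y1 y2 yc : V} (hy1 : y1 ∈ Bs) (hy2 : y2 ∈ Bs) (hyc : yc ∈ Bs)
    (huy1 : G.Adj u y1) (hvy2 : G.Adj v y2) (hucy : G.Adj u yc) (hvcy : G.Adj v yc) :
    Concl G := by
  classical
  set Qa : Finset V := nonNbrs G a with hQa
  have hbmemQa : b ∈ Qa := mem_nonNbrs.mpr ⟨C.hne_ab.symm, C.hab⟩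
  have hBmemQa : ∀ y ∈ Bs, y ∈ Qa := fun y hy => mem_nonNbrs.mpr ⟨C.B_ne_a hy, C.nadj_aB hy⟩
  set SuA : Finset V := insert u (insert a (nbrIn G u A)) with hSuA
  set SvA : Finset V := insert v (insert a (nbrIn G v A)) with hSvA
  have mu_SuA : u ∈ SuA := Finset.mem_insert_self _ _
  have ma_SuA : a ∈ SuA := Finset.mem_insert_of_mem (Finset.mem_insert_self _ _)
  have mA_SuA : ∀ x ∈ A, G.Adj u x → x ∈ SuA := fun x hx h =>
    Finset.mem_insert_of_mem (Finset.mem_insert_of_mem (mem_nbrIn.mpr ⟨hx, h⟩))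
  have mv_SvA : v ∈ SvA := Finset.mem_insert_self _ _
  have ma_SvA : a ∈ SvA := Finset.mem_insert_of_mem (Finset.mem_insert_self _ _)
  have mA_SvA : ∀ x ∈ A, G.Adj v x → x ∈ SvA := fun x hx h =>
    Finset.mem_insert_of_mem (Finset.mem_insert_of_mem (mem_nbrIn.mpr ⟨hx, h⟩))
  set Fr : Finset (Finset V) :=
    insert Qa (insert SuA (insert SvA
      ((A.image fun x => insert x (nbrIn G x Bs)) ∪
       (Bs.image fun y => insert y (insert b (nbrIn G y ({u, v} : Finset V))))))) with hFr
  have mQa : Qa ∈ Fr := Finset.mem_insert_self _ _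
  have mSuA : SuA ∈ Fr := Finset.mem_insert_of_mem (Finset.mem_insert_self _ _)
  have mSvA : SvA ∈ Fr :=
    Finset.mem_insert_of_mem (Finset.mem_insert_of_mem (Finset.mem_insert_self _ _))
  have mxs : ∀ x ∈ A, insert x (nbrIn G x Bs) ∈ Fr := fun x hx =>
    Finset.mem_insert_of_mem (Finset.mem_insert_of_mem (Finset.mem_insert_of_mem
      (Finset.mem_union_left _ (Finset.mem_image_of_mem _ hx))))
  have mTy : ∀ y ∈ Bs, insert y (insert b (nbrIn G y ({u, v} : Finset V))) ∈ Fr :=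
    fun y hy => Finset.mem_insert_of_mem (Finset.mem_insert_of_mem (Finset.mem_insert_of_mem
      (Finset.mem_union_right _ (Finset.mem_image_of_mem _ hy))))
  have covUB : ∀ y ∈ Bs, G.Adj u y → ∃ s ∈ Fr, u ∈ s ∧ y ∈ s := fun y hy hadj =>
    ⟨_, mTy y hy, Finset.mem_insert_of_mem (Finset.mem_insert_of_mem
      (mem_nbrIn.mpr ⟨Finset.mem_insert_self _ _, hadj.symm⟩)), Finset.mem_insert_self _ _⟩
  have covVB : ∀ y ∈ Bs, G.Adj v y → ∃ s ∈ Fr, v ∈ s ∧ y ∈ s := fun y hy hadj =>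
    ⟨_, mTy y hy, Finset.mem_insert_of_mem (Finset.mem_insert_of_mem
      (mem_nbrIn.mpr ⟨Finset.mem_insert_of_mem (Finset.mem_singleton_self _), hadj.symm⟩)),
      Finset.mem_insert_self _ _⟩
  have covUb : ∃ s ∈ Fr, u ∈ s ∧ b ∈ s :=
    ⟨_, mTy y1 hy1, Finset.mem_insert_of_mem (Finset.mem_insert_of_mem
      (mem_nbrIn.mpr ⟨Finset.mem_insert_self _ _, huy1.symm⟩)),
      Finset.mem_insert_of_mem (Finset.mem_insert_self _ _)⟩
  have covVb : ∃ s ∈ Fr, v ∈ s ∧ b ∈ s :=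
    ⟨_, mTy y2 hy2, Finset.mem_insert_of_mem (Finset.mem_insert_of_mem
      (mem_nbrIn.mpr ⟨Finset.mem_insert_of_mem (Finset.mem_singleton_self _), hvy2.symm⟩)),
      Finset.mem_insert_of_mem (Finset.mem_insert_self _ _)⟩
  have covUV : ∃ s ∈ Fr, u ∈ s ∧ v ∈ s :=
    ⟨_, mTy yc hyc, Finset.mem_insert_of_mem (Finset.mem_insert_of_mem
      (mem_nbrIn.mpr ⟨Finset.mem_insert_self _ _, hucy.symm⟩)),
      Finset.mem_insert_of_mem (Finset.mem_insert_of_mem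
        (mem_nbrIn.mpr ⟨Finset.mem_insert_of_mem (Finset.mem_singleton_self _), hvcy.symm⟩))⟩
  have sideP : ∀ p, (p = a ∨ p ∈ A) → p ≠ b ∧ ¬G.Adj b p := by
    rintro p (rfl | hp)
    · exact ⟨C.hne_ab, fun h => C.hab h.symm⟩
    · exact ⟨C.A_ne_b hp, C.nadj_bA hp⟩
  refine C.assemble Fr ?_ ?_ ?_
  · intro s hs
    rw [hFr] at hs
    rcases Finset.mem_insert.mp hs with rfl | hs
    · exact C.swapAB.Qb_clique
    rcases Finset.mem_insert.mp hs with rfl | hs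
    · exact C.star_uaA_clique hua
    rcases Finset.mem_insert.mp hs with rfl | hs
    · exact C.swapUV.star_uaA_clique hva
    rcases Finset.mem_union.mp hs with hs | hs
    · obtain ⟨x, hx, rfl⟩ := Finset.mem_image.mp hs
      exact C.xslot_clique hx
    · obtain ⟨y, hy, rfl⟩ := Finset.mem_image.mp hs
      exact C.Ty_clique hy hub hvb
  · have i1 : (A.image fun x => insert x (nbrIn G x Bs)).card ≤ A.card :=
      Finset.card_image_le
    have i2 : (Bs.image fun y => insert y (insert b (nbrIn G y ({u, v} : Finset V)))).card
        ≤ Bs.card := Finset.card_image_le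
    have i3 := Finset.card_union_le (A.image fun x => insert x (nbrIn G x Bs))
      (Bs.image fun y => insert y (insert b (nbrIn G y ({u, v} : Finset V))))
    have h2 : Fr.card ≤ (A.card + Bs.card) + 3 := by
      rw [hFr]
      have c1 := Finset.card_insert_le Qa (insert SuA (insert SvA
        ((A.image fun x => insert x (nbrIn G x Bs)) ∪
         (Bs.image fun y => insert y (insert b (nbrIn G y ({u, v} : Finset V)))))))
      have c2 := Finset.card_insert_le SuA (insert SvA
        ((A.image fun x => insert x (nbrIn G x Bs)) ∪
         (Bs.image fun y => insert y (insert b (nbrIn G y ({u, v} : Finset V))))))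
      have c3 := Finset.card_insert_le SvA
        ((A.image fun x => insert x (nbrIn G x Bs)) ∪
         (Bs.image fun y => insert y (insert b (nbrIn G y ({u, v} : Finset V)))))
      omega
    have h3 := C.budget
    omega
  · clear_value Qa SuA SvA Fr
    intro x y hxy
    rcases C.classify x with rfl | rfl | rfl | rfl | hx | hx <;>
      rcases C.classify y with rfl | rfl | rfl | rfl | hy | hy <;>
      try (first
        | exact (hxy.ne rfl).elim
        | exact absurd hxy C.hab
        | exact absurd hxy.symm C.hab
        | exact absurd hxy (C.nadj_aB ‹_›)
        | exact absurd hxy.symm (C.nadj_aB ‹_›)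
        | exact absurd hxy (C.nadj_bA ‹_›)
        | exact absurd hxy.symm (C.nadj_bA ‹_›)
        | (refine Or.inl ⟨sideP _ ?_, sideP _ ?_⟩ <;> tauto))
    -- (u, v)
    · exact Or.inr covUV
    -- (u, a)
    · exact Or.inr ⟨SuA, mSuA, mu_SuA, ma_SuA⟩
    -- (u, b)
    · exact Or.inr covUb
    -- (u, A)
    · exact Or.inr ⟨SuA, mSuA, mu_SuA, mA_SuA y hy hxy⟩
    -- (u, Bs)
    · exact Or.inr (covUB y hy hxy)
    -- (v, u)
    · obtain ⟨s, hs, h1, h2⟩ := covUV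
      exact Or.inr ⟨s, hs, h2, h1⟩
    -- (v, a)
    · exact Or.inr ⟨SvA, mSvA, mv_SvA, ma_SvA⟩
    -- (v, b)
    · exact Or.inr covVb
    -- (v, A)
    · exact Or.inr ⟨SvA, mSvA, mv_SvA, mA_SvA y hy hxy⟩
    -- (v, Bs)
    · exact Or.inr (covVB y hy hxy)
    -- (a, u)
    · exact Or.inr ⟨SuA, mSuA, ma_SuA, mu_SuA⟩
    -- (a, v)
    · exact Or.inr ⟨SvA, mSvA, ma_SvA, mv_SvA⟩
    -- (b, u)
    · obtain ⟨s, hs, h1, h2⟩ := covUb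
      exact Or.inr ⟨s, hs, h2, h1⟩
    -- (b, v)
    · obtain ⟨s, hs, h1, h2⟩ := covVb
      exact Or.inr ⟨s, hs, h2, h1⟩
    -- (b, Bs)
    · exact Or.inr ⟨Qa, mQa, hbmemQa, hBmemQa y hy⟩
    -- (A, u)
    · exact Or.inr ⟨SuA, mSuA, mA_SuA x hx hxy.symm, mu_SuA⟩
    -- (A, v)
    · exact Or.inr ⟨SvA, mSvA, mA_SvA x hx hxy.symm, mv_SvA⟩
    -- (A, Bs)
    · exact Or.inr ⟨insert x (nbrIn G x Bs), mxs x hx, Finset.mem_insert_self _ _,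
        Finset.mem_insert_of_mem (mem_nbrIn.mpr ⟨hy, hxy⟩)⟩
    -- (Bs, u)
    · obtain ⟨s, hs, h1, h2⟩ := covUB x hx hxy.symm
      exact Or.inr ⟨s, hs, h2, h1⟩
    -- (Bs, v)
    · obtain ⟨s, hs, h1, h2⟩ := covVB x hx hxy.symm
      exact Or.inr ⟨s, hs, h2, h1⟩
    -- (Bs, b)
    · exact Or.inr ⟨Qa, mQa, hBmemQa x hx, hbmemQa⟩
    -- (Bs, A)
    · exact Or.inr ⟨insert y (nbrIn G y Bs), mxs y hy,
        Finset.mem_insert_of_mem (mem_nbrIn.mpr ⟨hx, hxy.symm⟩), Finset.mem_insert_self _ _⟩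
    -- (Bs, Bs)
    · exact Or.inr ⟨Qa, mQa, hBmemQa x hx, hBmemQa y hy⟩

end Ctx

namespace Ctx

variable {V : Type*} [Fintype V] [DecidableEq V] {G : SimpleGraph V} {u v a b : V}
  {A Bs : Finset V} (C : Ctx G u v a b A Bs)

include C

/-- L4 subcase (d): a common `A`-neighbour `xc` of `u` and `v`. -/
lemma leafL4d (hua : G.Adj u a) (hub : G.Adj u b) (hva : G.Adj v a) (hvb : G.Adj v b)
    {xc : V} (hxc : xc ∈ A) (hucx : G.Adj u xc) (hvcx : G.Adj v xc) : Concl G := by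
  classical
  set Qa : Finset V := nonNbrs G a with hQa
  have hbmemQa : b ∈ Qa := mem_nonNbrs.mpr ⟨C.hne_ab.symm, C.hab⟩
  have hBmemQa : ∀ y ∈ Bs, y ∈ Qa := fun y hy => mem_nonNbrs.mpr ⟨C.B_ne_a hy, C.nadj_aB hy⟩
  set SuB : Finset V := insert u (insert b (nbrIn G u Bs)) with hSuB
  set SvB : Finset V := insert v (insert b (nbrIn G v Bs)) with hSvB
  have mu_SuB : u ∈ SuB := Finset.mem_insert_self _ _
  have mb_SuB : b ∈ SuB := Finset.mem_insert_of_mem (Finset.mem_insert_self _ _)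
  have mB_SuB : ∀ y ∈ Bs, G.Adj u y → y ∈ SuB := fun y hy h =>
    Finset.mem_insert_of_mem (Finset.mem_insert_of_mem (mem_nbrIn.mpr ⟨hy, h⟩))
  have mv_SvB : v ∈ SvB := Finset.mem_insert_self _ _
  have mb_SvB : b ∈ SvB := Finset.mem_insert_of_mem (Finset.mem_insert_self _ _)
  have mB_SvB : ∀ y ∈ Bs, G.Adj v y → y ∈ SvB := fun y hy h =>
    Finset.mem_insert_of_mem (Finset.mem_insert_of_mem (mem_nbrIn.mpr ⟨hy, h⟩))
  set Fr : Finset (Finset V) :=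
    insert Qa (insert SuB (insert SvB
      ((Bs.image fun y => insert y (nbrIn G y A)) ∪
       (A.image fun x => insert x (insert a (nbrIn G x ({u, v} : Finset V))))))) with hFr
  have mQa : Qa ∈ Fr := Finset.mem_insert_self _ _
  have mSuB : SuB ∈ Fr := Finset.mem_insert_of_mem (Finset.mem_insert_self _ _)
  have mSvB : SvB ∈ Fr :=
    Finset.mem_insert_of_mem (Finset.mem_insert_of_mem (Finset.mem_insert_self _ _))
  have mys : ∀ y ∈ Bs, insert y (nbrIn G y A) ∈ Fr := fun y hy =>
    Finset.mem_insert_of_mem (Finset.mem_insert_of_mem (Finset.mem_insert_of_mem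
      (Finset.mem_union_left _ (Finset.mem_image_of_mem _ hy))))
  have mT2 : ∀ x ∈ A, insert x (insert a (nbrIn G x ({u, v} : Finset V))) ∈ Fr := fun x hx =>
    Finset.mem_insert_of_mem (Finset.mem_insert_of_mem (Finset.mem_insert_of_mem
      (Finset.mem_union_right _ (Finset.mem_image_of_mem _ hx))))
  have covUA : ∀ x ∈ A, G.Adj u x → ∃ s ∈ Fr, u ∈ s ∧ x ∈ s := fun x hx hadj =>
    ⟨_, mT2 x hx, Finset.mem_insert_of_mem (Finset.mem_insert_of_mem
      (mem_nbrIn.mpr ⟨Finset.mem_insert_self _ _, hadj.symm⟩)), Finset.mem_insert_self _ _⟩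
  have covVA : ∀ x ∈ A, G.Adj v x → ∃ s ∈ Fr, v ∈ s ∧ x ∈ s := fun x hx hadj =>
    ⟨_, mT2 x hx, Finset.mem_insert_of_mem (Finset.mem_insert_of_mem
      (mem_nbrIn.mpr ⟨Finset.mem_insert_of_mem (Finset.mem_singleton_self _), hadj.symm⟩)),
      Finset.mem_insert_self _ _⟩
  have covUa : ∃ s ∈ Fr, u ∈ s ∧ a ∈ s :=
    ⟨_, mT2 xc hxc, Finset.mem_insert_of_mem (Finset.mem_insert_of_mem
      (mem_nbrIn.mpr ⟨Finset.mem_insert_self _ _, hucx.symm⟩)),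
      Finset.mem_insert_of_mem (Finset.mem_insert_self _ _)⟩
  have covVa : ∃ s ∈ Fr, v ∈ s ∧ a ∈ s :=
    ⟨_, mT2 xc hxc, Finset.mem_insert_of_mem (Finset.mem_insert_of_mem
      (mem_nbrIn.mpr ⟨Finset.mem_insert_of_mem (Finset.mem_singleton_self _), hvcx.symm⟩)),
      Finset.mem_insert_of_mem (Finset.mem_insert_self _ _)⟩
  have covUV : ∃ s ∈ Fr, u ∈ s ∧ v ∈ s :=
    ⟨_, mT2 xc hxc, Finset.mem_insert_of_mem (Finset.mem_insert_of_mem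
      (mem_nbrIn.mpr ⟨Finset.mem_insert_self _ _, hucx.symm⟩)),
      Finset.mem_insert_of_mem (Finset.mem_insert_of_mem
        (mem_nbrIn.mpr ⟨Finset.mem_insert_of_mem (Finset.mem_singleton_self _), hvcx.symm⟩))⟩
  have sideP : ∀ p, (p = a ∨ p ∈ A) → p ≠ b ∧ ¬G.Adj b p := by
    rintro p (rfl | hp)
    · exact ⟨C.hne_ab, fun h => C.hab h.symm⟩
    · exact ⟨C.A_ne_b hp, C.nadj_bA hp⟩
  refine C.assemble Fr ?_ ?_ ?_
  · intro s hs
    rw [hFr] at hs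
    rcases Finset.mem_insert.mp hs with rfl | hs
    · exact C.swapAB.Qb_clique
    rcases Finset.mem_insert.mp hs with rfl | hs
    · exact C.swapAB.star_uaA_clique hub
    rcases Finset.mem_insert.mp hs with rfl | hs
    · exact C.swapUV.swapAB.star_uaA_clique hvb
    rcases Finset.mem_union.mp hs with hs | hs
    · obtain ⟨y, hy, rfl⟩ := Finset.mem_image.mp hs
      exact C.swapAB.xslot_clique hy
    · obtain ⟨x, hx, rfl⟩ := Finset.mem_image.mp hs
      exact C.swapAB.Ty_clique hx hua hva
  · have i1 : (Bs.image fun y => insert y (nbrIn G y A)).card ≤ Bs.card :=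
      Finset.card_image_le
    have i2 : (A.image fun x => insert x (insert a (nbrIn G x ({u, v} : Finset V)))).card
        ≤ A.card := Finset.card_image_le
    have i3 := Finset.card_union_le (Bs.image fun y => insert y (nbrIn G y A))
      (A.image fun x => insert x (insert a (nbrIn G x ({u, v} : Finset V))))
    have h2 : Fr.card ≤ (A.card + Bs.card) + 3 := by
      rw [hFr]
      have c1 := Finset.card_insert_le Qa (insert SuB (insert SvB
        ((Bs.image fun y => insert y (nbrIn G y A)) ∪
         (A.image fun x => insert x (insert a (nbrIn G x ({u, v} : Finset V)))))))
      have c2 := Finset.card_insert_le SuB (insert SvB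
        ((Bs.image fun y => insert y (nbrIn G y A)) ∪
         (A.image fun x => insert x (insert a (nbrIn G x ({u, v} : Finset V))))))
      have c3 := Finset.card_insert_le SvB
        ((Bs.image fun y => insert y (nbrIn G y A)) ∪
         (A.image fun x => insert x (insert a (nbrIn G x ({u, v} : Finset V)))))
      omega
    have h3 := C.budget
    omega
  · clear_value Qa SuB SvB Fr
    intro x y hxy
    rcases C.classify x with rfl | rfl | rfl | rfl | hx | hx <;>
      rcases C.classify y with rfl | rfl | rfl | rfl | hy | hy <;>
      try (first
        | exact (hxy.ne rfl).elim
        | exact absurd hxy C.hab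
        | exact absurd hxy.symm C.hab
        | exact absurd hxy (C.nadj_aB ‹_›)
        | exact absurd hxy.symm (C.nadj_aB ‹_›)
        | exact absurd hxy (C.nadj_bA ‹_›)
        | exact absurd hxy.symm (C.nadj_bA ‹_›)
        | (refine Or.inl ⟨sideP _ ?_, sideP _ ?_⟩ <;> tauto))
    -- (u, v)
    · exact Or.inr covUV
    -- (u, a)
    · exact Or.inr covUa
    -- (u, b)
    · exact Or.inr ⟨SuB, mSuB, mu_SuB, mb_SuB⟩
    -- (u, A)
    · exact Or.inr (covUA y hy hxy)
    -- (u, Bs)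
    · exact Or.inr ⟨SuB, mSuB, mu_SuB, mB_SuB y hy hxy⟩
    -- (v, u)
    · obtain ⟨s, hs, h1, h2⟩ := covUV
      exact Or.inr ⟨s, hs, h2, h1⟩
    -- (v, a)
    · exact Or.inr covVa
    -- (v, b)
    · exact Or.inr ⟨SvB, mSvB, mv_SvB, mb_SvB⟩
    -- (v, A)
    · exact Or.inr (covVA y hy hxy)
    -- (v, Bs)
    · exact Or.inr ⟨SvB, mSvB, mv_SvB, mB_SvB y hy hxy⟩
    -- (a, u)
    · obtain ⟨s, hs, h1, h2⟩ := covUa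
      exact Or.inr ⟨s, hs, h2, h1⟩
    -- (a, v)
    · obtain ⟨s, hs, h1, h2⟩ := covVa
      exact Or.inr ⟨s, hs, h2, h1⟩
    -- (b, u)
    · exact Or.inr ⟨SuB, mSuB, mb_SuB, mu_SuB⟩
    -- (b, v)
    · exact Or.inr ⟨SvB, mSvB, mb_SvB, mv_SvB⟩
    -- (b, Bs)
    · exact Or.inr ⟨Qa, mQa, hbmemQa, hBmemQa y hy⟩
    -- (A, u)
    · obtain ⟨s, hs, h1, h2⟩ := covUA x hx hxy.symm
      exact Or.inr ⟨s, hs, h2, h1⟩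
    -- (A, v)
    · obtain ⟨s, hs, h1, h2⟩ := covVA x hx hxy.symm
      exact Or.inr ⟨s, hs, h2, h1⟩
    -- (A, Bs)
    · exact Or.inr ⟨insert y (nbrIn G y A), mys y hy,
        Finset.mem_insert_of_mem (mem_nbrIn.mpr ⟨hx, hxy.symm⟩), Finset.mem_insert_self _ _⟩
    -- (Bs, u)
    · exact Or.inr ⟨SuB, mSuB, mB_SuB x hx hxy.symm, mu_SuB⟩
    -- (Bs, v)
    · exact Or.inr ⟨SvB, mSvB, mB_SvB x hx hxy.symm, mv_SvB⟩
    -- (Bs, b)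
    · exact Or.inr ⟨Qa, mQa, hBmemQa x hx, hbmemQa⟩
    -- (Bs, A)
    · exact Or.inr ⟨insert x (nbrIn G x A), mys x hx, Finset.mem_insert_self _ _,
        Finset.mem_insert_of_mem (mem_nbrIn.mpr ⟨hy, hxy⟩)⟩
    -- (Bs, Bs)
    · exact Or.inr ⟨Qa, mQa, hBmemQa x hx, hBmemQa y hy⟩

end Ctx

namespace Ctx

variable {V : Type*} [Fintype V] [DecidableEq V] {G : SimpleGraph V} {u v a b : V}
  {A Bs : Finset V} (C : Ctx G u v a b A Bs)

include C

/-- L4 subcase (e): `u`,`v` have no common neighbour in `A` or `Bs`,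
but each has a private `Bs`-neighbour. -/
lemma leafL4e (hua : G.Adj u a) (hub : G.Adj u b) (hva : G.Adj v a) (hvb : G.Adj v b)
    {y1 y2 : V} (hy1 : y1 ∈ Bs) (hy2 : y2 ∈ Bs) (huy1 : G.Adj u y1) (hvy2 : G.Adj v y2)
    (hnoB : ∀ y ∈ Bs, ¬(G.Adj u y ∧ G.Adj v y))
    (hnoA : ∀ x ∈ A, ¬(G.Adj u x ∧ G.Adj v x)) : Concl G := by
  classical
  set Qa : Finset V := nonNbrs G a with hQa
  have hbmemQa : b ∈ Qa := mem_nonNbrs.mpr ⟨C.hne_ab.symm, C.hab⟩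
  have hBmemQa : ∀ y ∈ Bs, y ∈ Qa := fun y hy => mem_nonNbrs.mpr ⟨C.B_ne_a hy, C.nadj_aB hy⟩
  set Mu : Finset V := insert u (nbrIn G u A ∪ nbrIn G u Bs) with hMu
  set Mv : Finset V := insert v (nbrIn G v A ∪ nbrIn G v Bs) with hMv
  set Kuva : Finset V := ({u, v, a} : Finset V) with hKuva
  set Kuvb : Finset V := ({u, v, b} : Finset V) with hKuvb
  have mu_Mu : u ∈ Mu := Finset.mem_insert_self _ _
  have mA_Mu : ∀ x ∈ A, G.Adj u x → x ∈ Mu := fun x hx h =>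
    Finset.mem_insert_of_mem (Finset.mem_union_left _ (mem_nbrIn.mpr ⟨hx, h⟩))
  have mB_Mu : ∀ y ∈ Bs, G.Adj u y → y ∈ Mu := fun y hy h =>
    Finset.mem_insert_of_mem (Finset.mem_union_right _ (mem_nbrIn.mpr ⟨hy, h⟩))
  have mv_Mv : v ∈ Mv := Finset.mem_insert_self _ _
  have mA_Mv : ∀ x ∈ A, G.Adj v x → x ∈ Mv := fun x hx h =>
    Finset.mem_insert_of_mem (Finset.mem_union_left _ (mem_nbrIn.mpr ⟨hx, h⟩))
  have mB_Mv : ∀ y ∈ Bs, G.Adj v y → y ∈ Mv := fun y hy h =>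
    Finset.mem_insert_of_mem (Finset.mem_union_right _ (mem_nbrIn.mpr ⟨hy, h⟩))
  have muKa : u ∈ Kuva := Finset.mem_insert_self _ _
  have mvKa : v ∈ Kuva := Finset.mem_insert_of_mem (Finset.mem_insert_self _ _)
  have maKa : a ∈ Kuva :=
    Finset.mem_insert_of_mem (Finset.mem_insert_of_mem (Finset.mem_singleton_self _))
  have muKb : u ∈ Kuvb := Finset.mem_insert_self _ _
  have mvKb : v ∈ Kuvb := Finset.mem_insert_of_mem (Finset.mem_insert_self _ _)
  have mbKb : b ∈ Kuvb :=
    Finset.mem_insert_of_mem (Finset.mem_insert_of_mem (Finset.mem_singleton_self _))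
  set Fr : Finset (Finset V) :=
    insert Qa (insert Mu (insert Mv (insert Kuva (insert Kuvb
      (A.image fun x => insert x (nbrIn G x Bs)))))) with hFr
  have mQa : Qa ∈ Fr := Finset.mem_insert_self _ _
  have mMu : Mu ∈ Fr := Finset.mem_insert_of_mem (Finset.mem_insert_self _ _)
  have mMv : Mv ∈ Fr :=
    Finset.mem_insert_of_mem (Finset.mem_insert_of_mem (Finset.mem_insert_self _ _))
  have mKuva : Kuva ∈ Fr := Finset.mem_insert_of_mem (Finset.mem_insert_of_mem
    (Finset.mem_insert_of_mem (Finset.mem_insert_self _ _)))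
  have mKuvb : Kuvb ∈ Fr := Finset.mem_insert_of_mem (Finset.mem_insert_of_mem
    (Finset.mem_insert_of_mem (Finset.mem_insert_of_mem (Finset.mem_insert_self _ _))))
  have mxs : ∀ x ∈ A, insert x (nbrIn G x Bs) ∈ Fr := fun x hx =>
    Finset.mem_insert_of_mem (Finset.mem_insert_of_mem (Finset.mem_insert_of_mem
      (Finset.mem_insert_of_mem (Finset.mem_insert_of_mem (Finset.mem_image_of_mem _ hx)))))
  have sideP : ∀ p, (p = a ∨ p ∈ A) → p ≠ b ∧ ¬G.Adj b p := by
    rintro p (rfl | hp)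
    · exact ⟨C.hne_ab, fun h => C.hab h.symm⟩
    · exact ⟨C.A_ne_b hp, C.nadj_bA hp⟩
  refine C.assemble Fr ?_ ?_ ?_
  · intro s hs
    rw [hFr] at hs
    rcases Finset.mem_insert.mp hs with rfl | hs
    · exact C.swapAB.Qb_clique
    rcases Finset.mem_insert.mp hs with rfl | hs
    · exact C.Mu_clique hnoA hnoB
    rcases Finset.mem_insert.mp hs with rfl | hs
    · exact C.swapUV.Mu_clique (fun x hx h => hnoA x hx ⟨h.2, h.1⟩)
        (fun y hy h => hnoB y hy ⟨h.2, h.1⟩)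
    rcases Finset.mem_insert.mp hs with rfl | hs
    · exact C.triple_clique C.huv hua hva
    rcases Finset.mem_insert.mp hs with rfl | hs
    · exact C.triple_clique C.huv hub hvb
    obtain ⟨x, hx, rfl⟩ := Finset.mem_image.mp hs
    exact C.xslot_clique hx
  · have i1 : (A.image fun x => insert x (nbrIn G x Bs)).card ≤ A.card :=
      Finset.card_image_le
    have h2 : Fr.card ≤ A.card + 5 := by
      rw [hFr]
      have c1 := Finset.card_insert_le Qa (insert Mu (insert Mv (insert Kuva (insert Kuvb
        (A.image fun x => insert x (nbrIn G x Bs))))))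
      have c2 := Finset.card_insert_le Mu (insert Mv (insert Kuva (insert Kuvb
        (A.image fun x => insert x (nbrIn G x Bs)))))
      have c3 := Finset.card_insert_le Mv (insert Kuva (insert Kuvb
        (A.image fun x => insert x (nbrIn G x Bs))))
      have c4 := Finset.card_insert_le Kuva (insert Kuvb
        (A.image fun x => insert x (nbrIn G x Bs)))
      have c5 := Finset.card_insert_le Kuvb (A.image fun x => insert x (nbrIn G x Bs))
      omega
    have h3 := C.budget
    have hyne : y1 ≠ y2 := fun h => hnoB y1 hy1 ⟨huy1, h ▸ hvy2⟩
    have h4 : 2 ≤ Bs.card := Finset.one_lt_card.mpr ⟨y1, hy1, y2, hy2, hyne⟩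
    omega
  · clear_value Qa Mu Mv Kuva Kuvb Fr
    intro x y hxy
    rcases C.classify x with rfl | rfl | rfl | rfl | hx | hx <;>
      rcases C.classify y with rfl | rfl | rfl | rfl | hy | hy <;>
      try (first
        | exact (hxy.ne rfl).elim
        | exact absurd hxy C.hab
        | exact absurd hxy.symm C.hab
        | exact absurd hxy (C.nadj_aB ‹_›)
        | exact absurd hxy.symm (C.nadj_aB ‹_›)
        | exact absurd hxy (C.nadj_bA ‹_›)
        | exact absurd hxy.symm (C.nadj_bA ‹_›)
        | (refine Or.inl ⟨sideP _ ?_, sideP _ ?_⟩ <;> tauto))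
    -- (u, v)
    · exact Or.inr ⟨Kuva, mKuva, muKa, mvKa⟩
    -- (u, a)
    · exact Or.inr ⟨Kuva, mKuva, muKa, maKa⟩
    -- (u, b)
    · exact Or.inr ⟨Kuvb, mKuvb, muKb, mbKb⟩
    -- (u, A)
    · exact Or.inr ⟨Mu, mMu, mu_Mu, mA_Mu y hy hxy⟩
    -- (u, Bs)
    · exact Or.inr ⟨Mu, mMu, mu_Mu, mB_Mu y hy hxy⟩
    -- (v, u)
    · exact Or.inr ⟨Kuva, mKuva, mvKa, muKa⟩
    -- (v, a)
    · exact Or.inr ⟨Kuva, mKuva, mvKa, maKa⟩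
    -- (v, b)
    · exact Or.inr ⟨Kuvb, mKuvb, mvKb, mbKb⟩
    -- (v, A)
    · exact Or.inr ⟨Mv, mMv, mv_Mv, mA_Mv y hy hxy⟩
    -- (v, Bs)
    · exact Or.inr ⟨Mv, mMv, mv_Mv, mB_Mv y hy hxy⟩
    -- (a, u)
    · exact Or.inr ⟨Kuva, mKuva, maKa, muKa⟩
    -- (a, v)
    · exact Or.inr ⟨Kuva, mKuva, maKa, mvKa⟩
    -- (b, u)
    · exact Or.inr ⟨Kuvb, mKuvb, mbKb, muKb⟩
    -- (b, v)
    · exact Or.inr ⟨Kuvb, mKuvb, mbKb, mvKb⟩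
    -- (b, Bs)
    · exact Or.inr ⟨Qa, mQa, hbmemQa, hBmemQa y hy⟩
    -- (A, u)
    · exact Or.inr ⟨Mu, mMu, mA_Mu x hx hxy.symm, mu_Mu⟩
    -- (A, v)
    · exact Or.inr ⟨Mv, mMv, mA_Mv x hx hxy.symm, mv_Mv⟩
    -- (A, Bs)
    · exact Or.inr ⟨insert x (nbrIn G x Bs), mxs x hx, Finset.mem_insert_self _ _,
        Finset.mem_insert_of_mem (mem_nbrIn.mpr ⟨hy, hxy⟩)⟩
    -- (Bs, u)
    · exact Or.inr ⟨Mu, mMu, mB_Mu x hx hxy.symm, mu_Mu⟩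
    -- (Bs, v)
    · exact Or.inr ⟨Mv, mMv, mB_Mv x hx hxy.symm, mv_Mv⟩
    -- (Bs, b)
    · exact Or.inr ⟨Qa, mQa, hBmemQa x hx, hbmemQa⟩
    -- (Bs, A)
    · exact Or.inr ⟨insert y (nbrIn G y Bs), mxs y hy,
        Finset.mem_insert_of_mem (mem_nbrIn.mpr ⟨hx, hxy.symm⟩), Finset.mem_insert_self _ _⟩
    -- (Bs, Bs)
    · exact Or.inr ⟨Qa, mQa, hBmemQa x hx, hBmemQa y hy⟩

/-- Case L4 : `u` and `v` both adjacent to both `a` and `b`. -/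
lemma leafL4 (hua : G.Adj u a) (hub : G.Adj u b) (hva : G.Adj v a) (hvb : G.Adj v b) :
    Concl G := by
  classical
  by_cases h5a : ∃ y ∈ Bs, ¬G.Adj u y ∧ ¬G.Adj v y
  · obtain ⟨y0', hy0', hnu, hnv⟩ := h5a
    exact C.leafL4a hua hub hva hvb hy0' hnu hnv
  · push_neg at h5a
    by_cases hU : ∃ y ∈ Bs, G.Adj u y
    · obtain ⟨y1, hy1, huy1⟩ := hU
      by_cases hV : ∃ y ∈ Bs, G.Adj v y
      · obtain ⟨y2, hy2, hvy2⟩ := hV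
        by_cases hC : ∃ y ∈ Bs, G.Adj u y ∧ G.Adj v y
        · obtain ⟨yc, hyc, hucy, hvcy⟩ := hC
          exact C.leafL4c hua hub hva hvb hy1 hy2 hyc huy1 hvy2 hucy hvcy
        · by_cases hD : ∃ x ∈ A, G.Adj u x ∧ G.Adj v x
          · obtain ⟨xc, hxc, hucx, hvcx⟩ := hD
            exact C.leafL4d hua hub hva hvb hxc hucx hvcx
          · push_neg at hC hD
            exact C.leafL4e hua hub hva hvb hy1 hy2 huy1 hvy2
              (fun y hy h => hC y hy h.1 h.2) (fun x hx h => hD x hx h.1 h.2)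
      · push_neg at hV
        exact C.swapUV.leafL4b hva hvb hua hub hV
          (fun y hy => Classical.byContradiction fun h => hV y hy (h5a y hy h))
    · push_neg at hU
      exact C.leafL4b hua hub hva hvb hU (fun y hy => h5a y hy (hU y hy))

end Ctx


namespace Ctx

variable {V : Type*} [Fintype V] [DecidableEq V] {G : SimpleGraph V} {u v a b : V}
  {A Bs : Finset V} (C : Ctx G u v a b A Bs)

include C

lemma core (hdom : ∀ w, w ≠ u → w ≠ v → G.Adj w u ∨ G.Adj w v)
    {x0 y0 : V} (hx0 : x0 ∈ A) (hy0 : y0 ∈ Bs) (hxy0 : G.Adj x0 y0) : Concl G := by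
  classical
  have hdom' : ∀ w, w ≠ v → w ≠ u → G.Adj w v ∨ G.Adj w u := fun w h1 h2 =>
    (hdom w h2 h1).symm
  by_cases hua : G.Adj u a <;> by_cases hub : G.Adj u b <;>
    by_cases hva : G.Adj v a <;> by_cases hvb : G.Adj v b
  · exact C.leafL4 hua hub hva hvb
  · exact C.swapUV.leafL3 hvb hua hub hdom' hx0 hy0 hxy0
  · exact C.swapUV.swapAB.leafL3 hva hub hua hdom' hy0 hx0 hxy0.symm
  · exact absurd (C.hpair v a b C.hav.symm C.hbv.symm C.hne_ab hva hvb) C.hab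
  · exact C.leafL3 hub hva hvb hdom hx0 hy0 hxy0
  · exact C.leafL1 hub hvb
  · exact C.leafL2 hub hva hy0
  · exact absurd (C.hpair v a b C.hav.symm C.hbv.symm C.hne_ab hva hvb) C.hab
  · exact C.swapAB.leafL3 hua hvb hva hdom hy0 hx0 hxy0.symm
  · exact C.swapUV.leafL2 hvb hua hy0
  · exact C.swapAB.leafL1 hua hva
  · exact absurd (C.hpair v a b C.hav.symm C.hbv.symm C.hne_ab hva hvb) C.hab
  · exact absurd (C.hpair u a b C.hau.symm C.hbu.symm C.hne_ab hua hub) C.hab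
  · exact absurd (C.hpair u a b C.hau.symm C.hbu.symm C.hne_ab hua hub) C.hab
  · exact absurd (C.hpair u a b C.hau.symm C.hbu.symm C.hne_ab hua hub) C.hab
  · exact absurd (C.hpair u a b C.hau.symm C.hbu.symm C.hne_ab hua hub) C.hab

end Ctx

/-- If `G` has independence number 2 and a dominating edge `uv` such that
`G \ {u,v}` has diameter 3, then `ecc(G) ≤ n`. -/
theorem stmt_0 {V : Type*} [Fintype V] (G : SimpleGraph V) (u v : V)
    (hα : IndepNumEq G 2)
    (hdom : IsDominatingEdge G u v)
    (hdiam : (G.induce {w : V | w ≠ u ∧ w ≠ v}).diam = 3) :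
    ∃ F : Finset (Finset V), F.card ≤ Fintype.card V ∧
      (∀ s ∈ F, G.IsClique (s : Set V)) ∧
      ∀ x y : V, G.Adj x y → ∃ s ∈ F, x ∈ s ∧ y ∈ s := by
  classical
  have hpair := alpha_pair hα
  obtain ⟨a, b, x0, y0, hau, hav, hbu, hbv, hx0u, hx0v, hy0u, hy0v, hneab, hab, hnocom,
    hax0, hx0y0, hy0b⟩ := diam_extract G u v hdiam
  set A : Finset V :=
    Finset.univ.filter (fun x => x ≠ u ∧ x ≠ v ∧ x ≠ a ∧ x ≠ b ∧ G.Adj a x) with hA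
  set Bs : Finset V :=
    Finset.univ.filter (fun x => x ≠ u ∧ x ≠ v ∧ x ≠ a ∧ x ≠ b ∧ G.Adj b x) with hBs
  have C : Ctx G u v a b A Bs :=
    { hpair := hpair
      huv := hdom.1
      hab := hab
      hne_ab := hneab
      hau := hau
      hav := hav
      hbu := hbu
      hbv := hbv
      hnocom := hnocom
      hA := fun x => by simp [hA]
      hB := fun x => by simp [hBs] }
  have hx0A : x0 ∈ A := by
    rw [hA]
    simp only [Finset.mem_filter, Finset.mem_univ, true_and]
    exact ⟨hx0u, hx0v, fun h => (h ▸ hax0).ne rfl, fun h => hab (h ▸ hax0), hax0⟩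
  have hy0B : y0 ∈ Bs := by
    rw [hBs]
    simp only [Finset.mem_filter, Finset.mem_univ, true_and]
    exact ⟨hy0u, hy0v, fun h => hab (h ▸ hy0b : G.Adj a b), fun h => (h ▸ hy0b).ne rfl,
      hy0b.symm⟩
  exact C.core hdom.2 hx0A hy0B hx0y0
end

section
/- Let G be a finite simple graph on n vertices with independence number α(G) = 2 and diameter 3. Then the edge clique cover number of G satisfies ecc(G) ≤ ⌈(n+1)/2⌉. -/
section Helpers
open Finset

lemma no_indep_triple {V : Type*} (G : SimpleGraph V) (hα : IndepNumEq G 2)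
    {a b c : V} (hab : a ≠ b) (hac : a ≠ c) (hbc : b ≠ c)
    (h1 : ¬ G.Adj a b) (h2 : ¬ G.Adj a c) (h3 : ¬ G.Adj b c) : False := by
  classical
  have h := hα.2 {a, b, c} ?_
  · rw [card_insert_of_notMem (by simp [hab, hac]),
      card_insert_of_notMem (by simp [hbc]), card_singleton] at h
    omega
  · intro x hx y hy hxy
    simp only [coe_insert, Set.mem_insert_iff, coe_singleton, Set.mem_singleton_iff] at hx hy
    rcases hx with rfl|rfl|rfl <;> rcases hy with rfl|rfl|rfl <;>
      first | exact absurd rfl hxy | assumption |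
        (intro h; exact (by assumption : ¬ G.Adj _ _) h.symm)

lemma aux_main {V : Type*} [Fintype V] [DecidableEq V]
    (G : SimpleGraph V) [DecidableRel G.Adj] (hα : IndepNumEq G 2) {u v : V}
    (hdist : G.dist u v = 3)
    (hle : (univ.filter (G.Adj u ·)).card ≤ (univ.filter (G.Adj v ·)).card) :
    ∃ F : Finset (Finset V),
      (F.card : ℤ) ≤ ⌈((Fintype.card V : ℚ) + 1) / 2⌉ ∧
      (∀ s ∈ F, G.IsClique (s : Set V)) ∧
      ∀ x y : V, G.Adj x y → ∃ s ∈ F, x ∈ s ∧ y ∈ s := by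
  set A := univ.filter (G.Adj u ·) with hA
  set B := univ.filter (G.Adj v ·) with hB
  have memA : ∀ w, w ∈ A ↔ G.Adj u w := by intro w; simp [hA]
  have memB : ∀ w, w ∈ B ↔ G.Adj v w := by intro w; simp [hB]
  have huv : ¬ G.Adj u v := by
    intro h
    have := G.dist_le h.toWalk
    rw [hdist] at this
    simp at this
  have hne : u ≠ v := by
    intro h; rw [h, SimpleGraph.dist_self] at hdist; simp at hdist
  -- no common neighbor
  have hcommon : ∀ w, G.Adj u w → ¬ G.Adj v w := by
    intro w h1 h2
    have := G.dist_le (SimpleGraph.Walk.cons h1 (SimpleGraph.Walk.cons h2.symm SimpleGraph.Walk.nil))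
    rw [hdist] at this
    simp at this
  -- every vertex is u, v, in A, or in B
  have hcover : ∀ w, w ≠ u → w ≠ v → w ∈ A ∨ w ∈ B := by
    intro w hwu hwv
    by_contra hc
    push_neg at hc
    rw [memA, memB] at hc
    exact no_indep_triple G hα hne (Ne.symm hwu) (Ne.symm hwv) huv hc.1 hc.2
  -- vertices in A are not adjacent to v, and vice versa
  have hAv : ∀ a ∈ A, ¬ G.Adj v a := fun a ha => hcommon a ((memA a).1 ha)
  have hBu : ∀ b ∈ B, ¬ G.Adj u b := fun b hb h => hcommon b h ((memB b).1 hb)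
  have hvA : v ∉ A := fun h => huv ((memA v).1 h)
  have huB : u ∉ B := fun h => huv (((memB u).1 h).symm)
  have huA : u ∉ A := fun h => G.irrefl ((memA u).1 h)
  have hvB : v ∉ B := fun h => G.irrefl ((memB v).1 h)
  -- A ∪ {u} is a clique
  have hcliqueA : G.IsClique ((insert u A : Finset V) : Set V) := by
    intro x hx y hy hxy
    simp only [coe_insert, Set.mem_insert_iff, mem_coe] at hx hy
    rcases hx with rfl|hx
    · rcases hy with rfl|hy
      · exact absurd rfl hxy
      · exact (memA y).1 hy
    · rcases hy with rfl|hy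
      · exact ((memA x).1 hx).symm
      · by_contra hadj
        exact no_indep_triple G hα hxy (fun h => hvA (by rw [← h]; exact hx))
          (fun h => hvA (by rw [← h]; exact hy))
          hadj (fun h => hAv x hx h.symm) (fun h => hAv y hy h.symm)
  have hcliqueB : G.IsClique ((insert v B : Finset V) : Set V) := by
    intro x hx y hy hxy
    simp only [coe_insert, Set.mem_insert_iff, mem_coe] at hx hy
    rcases hx with rfl|hx
    · rcases hy with rfl|hy
      · exact absurd rfl hxy
      · exact (memB y).1 hy
    · rcases hy with rfl|hy
      · exact ((memB x).1 hx).symm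
      · by_contra hadj
        exact no_indep_triple G hα hxy (fun h => huB (by rw [← h]; exact hx))
          (fun h => huB (by rw [← h]; exact hy))
          hadj (fun h => hBu x hx h.symm) (fun h => hBu y hy h.symm)
  -- cross cliques
  have hcliqueC : ∀ a ∈ A, G.IsClique ((insert a (B.filter (G.Adj a ·)) : Finset V) : Set V) := by
    intro a ha x hx y hy hxy
    simp only [coe_insert, Set.mem_insert_iff, mem_coe, mem_filter] at hx hy
    rcases hx with rfl|⟨hx, hax⟩
    · rcases hy with rfl|⟨hy, hay⟩
      · exact absurd rfl hxy
      · exact hay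
    · rcases hy with rfl|⟨hy, hay⟩
      · exact hax.symm
      · exact hcliqueB (by simp [hx]) (by simp [hy]) hxy
  classical
  refine ⟨insert (insert u A) (insert (insert v B)
    (A.image (fun a => insert a (B.filter (G.Adj a ·))))), ?_, ?_, ?_⟩
  · -- cardinality bound
    have hcard1 : (insert (insert u A) (insert (insert v B)
        (A.image (fun a => insert a (B.filter (G.Adj a ·)))))).card ≤ 2 + A.card := by
      calc _ ≤ (A.image (fun a => insert a (B.filter (G.Adj a ·)))).card + 2 := by
              apply le_trans (card_insert_le _ _)
              have := card_insert_le (insert v B) (A.image (fun a => insert a (B.filter (G.Adj a ·))))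
              omega
        _ ≤ A.card + 2 := by have := card_image_le (s := A) (f := fun a => insert a (B.filter (G.Adj a ·))); omega
        _ = 2 + A.card := by omega
    -- 2 * A.card + 2 ≤ n
    have hsub : insert u (insert v (A ∪ B)) ⊆ univ := subset_univ _
    have hdisj : Disjoint A B := by
      rw [disjoint_left]
      intro w hw hw'
      exact hcommon w ((memA w).1 hw) ((memB w).1 hw')
    have hcardn : 2 + A.card + B.card ≤ Fintype.card V := by
      have h1 : (insert u (insert v (A ∪ B))).card = 2 + A.card + B.card := by
        rw [card_insert_of_notMem (by simp [hne, huA, huB]),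
          card_insert_of_notMem (by simp [hvA, hvB]),
          card_union_of_disjoint hdisj]
        omega
      calc 2 + A.card + B.card = (insert u (insert v (A ∪ B))).card := h1.symm
        _ ≤ univ.card := card_le_card hsub
        _ = Fintype.card V := card_univ
    have h2A : 2 * A.card + 2 ≤ Fintype.card V := by omega
    -- now the ceiling arithmetic
    have key : ((insert (insert u A) (insert (insert v B)
        (A.image (fun a => insert a (B.filter (G.Adj a ·)))))).card : ℤ) ≤ 2 + A.card := by
      exact_mod_cast hcard1
    refine le_trans key ?_
    have : (2 + (A.card : ℤ)) - 1 < ⌈((Fintype.card V : ℚ) + 1) / 2⌉ + 1 - 1 → _ := id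
    have hlt : ((2 + (A.card : ℤ)) - 1 : ℤ) < ⌈((Fintype.card V : ℚ) + 1) / 2⌉ := by
      rw [Int.lt_ceil]
      push_cast
      rw [lt_div_iff₀ (by norm_num : (0:ℚ) < 2)]
      have : (2 * A.card + 2 : ℚ) ≤ (Fintype.card V : ℚ) := by exact_mod_cast h2A
      linarith
    omega
  · -- cliques
    intro s hs
    simp only [mem_insert, mem_image] at hs
    rcases hs with rfl | rfl | ⟨a, ha, rfl⟩
    · exact hcliqueA
    · exact hcliqueB
    · exact hcliqueC a ha
  · -- edge cover
    intro x y hxy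
    have hxcase : x = u ∨ x = v ∨ x ∈ A ∨ x ∈ B := by
      by_cases h1 : x = u
      · left; exact h1
      by_cases h2 : x = v
      · right; left; exact h2
      · rcases hcover x h1 h2 with h|h
        · right; right; left; exact h
        · right; right; right; exact h
    have hycase : y = u ∨ y = v ∨ y ∈ A ∨ y ∈ B := by
      by_cases h1 : y = u
      · left; exact h1
      by_cases h2 : y = v
      · right; left; exact h2
      · rcases hcover y h1 h2 with h|h
        · right; right; left; exact h
        · right; right; right; exact h
    have inF1 : insert u A ∈ insert (insert u A) (insert (insert v B)
        (A.image (fun a => insert a (B.filter (G.Adj a ·))))) := mem_insert_self _ _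
    have inF2 : insert v B ∈ insert (insert u A) (insert (insert v B)
        (A.image (fun a => insert a (B.filter (G.Adj a ·))))) := by
      simp
    have inF3 : ∀ a ∈ A, insert a (B.filter (G.Adj a ·)) ∈ insert (insert u A)
        (insert (insert v B) (A.image (fun a => insert a (B.filter (G.Adj a ·))))) := by
      intro a ha
      simp only [mem_insert, mem_image]
      right; right; exact ⟨a, ha, rfl⟩
    rcases hxcase with h|h|hx|hx
    · -- x = u: y ∈ A
      refine ⟨insert u A, inF1, by rw [h]; exact mem_insert_self _ _,
        mem_insert_of_mem ((memA y).2 (by rw [← h]; exact hxy))⟩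
    · -- x = v: y ∈ B
      refine ⟨insert v B, inF2, by rw [h]; exact mem_insert_self _ _,
        mem_insert_of_mem ((memB y).2 (by rw [← h]; exact hxy))⟩
    · rcases hycase with h|h|hy|hy
      · refine ⟨insert u A, inF1, mem_insert_of_mem ((memA x).2 (by rw [← h]; exact hxy.symm)),
          by rw [h]; exact mem_insert_self _ _⟩
      · exact absurd (by rw [← h]; exact hxy.symm : G.Adj v x) (hAv x hx)
      · exact ⟨insert u A, inF1, mem_insert_of_mem hx, mem_insert_of_mem hy⟩
      · exact ⟨insert x (B.filter (G.Adj x ·)), inF3 x hx, mem_insert_self _ _,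
          mem_insert_of_mem (mem_filter.2 ⟨hy, hxy⟩)⟩
    · rcases hycase with h|h|hy|hy
      · exact absurd (by rw [← h]; exact hxy.symm : G.Adj u x) (hBu x hx)
      · refine ⟨insert v B, inF2, mem_insert_of_mem ((memB x).2 (by rw [← h]; exact hxy.symm)),
          by rw [h]; exact mem_insert_self _ _⟩
      · exact ⟨insert y (B.filter (G.Adj y ·)), inF3 y hy, mem_insert_of_mem
          (mem_filter.2 ⟨hx, hxy.symm⟩), mem_insert_self _ _⟩
      · exact ⟨insert v B, inF2, mem_insert_of_mem hx, mem_insert_of_mem hy⟩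


end Helpers

/-- A graph with independence number 2 and diameter 3 satisfies
`ecc(G) ≤ ⌈(n+1)/2⌉`. -/
theorem stmt_2 {V : Type*} [Fintype V] (G : SimpleGraph V)
    (hα : IndepNumEq G 2) (hdiam : G.diam = 3) :
    ∃ F : Finset (Finset V),
      (F.card : ℤ) ≤ ⌈((Fintype.card V : ℚ) + 1) / 2⌉ ∧
      (∀ s ∈ F, G.IsClique (s : Set V)) ∧
      ∀ x y : V, G.Adj x y → ∃ s ∈ F, x ∈ s ∧ y ∈ s := by
  classical
  cases isEmpty_or_nonempty V with
  | inl h =>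
    exfalso
    rw [SimpleGraph.diam_eq_zero_of_not_connected (fun hc => hc.nonempty.elim
      (fun x => (h.false x))) ] at hdiam
    omega
  | inr h =>
    obtain ⟨u, v, huv⟩ := G.exists_dist_eq_diam
    rw [hdiam] at huv
    rcases le_total ((Finset.univ.filter (G.Adj u ·)).card)
        ((Finset.univ.filter (G.Adj v ·)).card) with hle | hle
    · exact aux_main G hα huv hle
    · exact aux_main G hα (by rwa [SimpleGraph.dist_comm]) hle
end

section
/- Let G be a finite simple graph on n vertices with independence number α(G) = 2. If G has no dominating edge, then the edge clique cover number of G satisfies ecc(G) ≤ n. -/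
/-- A graph with independence number 2 and no dominating edge satisfies
`ecc(G) ≤ n`. -/
theorem stmt_3 {V : Type*} [Fintype V] (G : SimpleGraph V)
    (hα : IndepNumEq G 2)
    (hdom : ∀ u v : V, ¬ IsDominatingEdge G u v) :
    ∃ F : Finset (Finset V), F.card ≤ Fintype.card V ∧
      (∀ s ∈ F, G.IsClique (s : Set V)) ∧
      ∀ x y : V, G.Adj x y → ∃ s ∈ F, x ∈ s ∧ y ∈ s := by
  classical
  set C : V → Finset V := fun v => Finset.univ.filter (fun x => x ≠ v ∧ ¬ G.Adj v x) with hC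
  refine ⟨Finset.univ.image C, ?_, ?_, ?_⟩
  · calc (Finset.univ.image C).card ≤ Finset.univ.card := Finset.card_image_le
      _ = Fintype.card V := rfl
  · intro s hs
    obtain ⟨v, _, rfl⟩ := Finset.mem_image.mp hs
    intro a ha b hb hab
    simp only [hC, Finset.coe_filter, Set.mem_setOf_eq] at ha hb
    by_contra hadj
    have hind : IsIndepSet G (↑({v, a, b} : Finset V)) := by
      intro x hx y hy hxy
      simp only [Finset.coe_insert, Set.mem_insert_iff, Finset.coe_singleton,
        Set.mem_singleton_iff] at hx hy
      rcases hx with rfl | rfl | rfl <;> rcases hy with rfl | rfl | rfl <;>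
        first
          | exact absurd rfl hxy
          | exact ha.2.2
          | exact hb.2.2
          | exact fun h => ha.2.2 (G.adj_symm h)
          | exact fun h => hb.2.2 (G.adj_symm h)
          | exact hadj
          | exact fun h => hadj (G.adj_symm h)
    have hcard : ({v, a, b} : Finset V).card = 3 := by
      rw [Finset.card_insert_of_notMem, Finset.card_insert_of_notMem]
      · simp
      · simp [hab]
      · simp only [Finset.mem_insert, Finset.mem_singleton]
        push_neg
        exact ⟨fun h => ha.2.1 h.symm, fun h => hb.2.1 h.symm⟩
    have := hα.2 _ hind
    omega
  · intro x y hxy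
    have hnd := hdom x y
    unfold IsDominatingEdge at hnd
    push_neg at hnd
    obtain ⟨w, hwx, hwy, hnx, hny⟩ := hnd hxy
    refine ⟨C w, Finset.mem_image_of_mem C (Finset.mem_univ w), ?_, ?_⟩ <;>
      simp only [hC, Finset.mem_filter, Finset.mem_univ, true_and]
    · exact ⟨fun h => hwx h.symm, hnx⟩
    · exact ⟨fun h => hwy h.symm, hny⟩
end

section
/- Let G be a finite simple graph with independence number α(G) = 2 that has a dominating edge uv such that the set of vertices of G other than u and v is a clique of G. Then the edge clique cover number of G satisfies ecc(G) ≤ 4. -/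
/-- If `G` has independence number 2, a dominating edge `uv`, and the set of
vertices other than `u` and `v` is a clique, then `ecc(G) ≤ 4`. -/
theorem stmt_5 {V : Type*} [Fintype V] (G : SimpleGraph V) (u v : V)
    (hα : IndepNumEq G 2)
    (hdom : IsDominatingEdge G u v)
    (hclique : G.IsClique {w : V | w ≠ u ∧ w ≠ v}) :
    ∃ F : Finset (Finset V), F.card ≤ 4 ∧
      (∀ s ∈ F, G.IsClique (s : Set V)) ∧
      ∀ x y : V, G.Adj x y → ∃ s ∈ F, x ∈ s ∧ y ∈ s := by
  classical
  let C : Finset V := Finset.univ.filter (fun w => w ≠ u ∧ w ≠ v)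
  let Cu : Finset V := insert u (C.filter (fun w => G.Adj u w))
  let Cv : Finset V := insert v (C.filter (fun w => G.Adj v w))
  have hCmem : ∀ w, w ∈ C ↔ w ≠ u ∧ w ≠ v := by
    intro w; simp [C]
  have hCumem : ∀ w, w ∈ Cu ↔ w = u ∨ (w ∈ C ∧ G.Adj u w) := by
    intro w; simp [Cu]
  have hCvmem : ∀ w, w ∈ Cv ↔ w = v ∨ (w ∈ C ∧ G.Adj v w) := by
    intro w; simp [Cv]
  have hCclique : G.IsClique (C : Set V) := by
    intro x hx y hy hxy
    exact hclique ((hCmem x).mp hx) ((hCmem y).mp hy) hxy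
  have hCuclique : G.IsClique (Cu : Set V) := by
    intro x hx y hy hxy
    rw [Finset.mem_coe, hCumem] at hx hy
    rcases hx with rfl | ⟨hxC, hxA⟩ <;> rcases hy with rfl | ⟨hyC, hyA⟩
    · exact absurd rfl hxy
    · exact hyA
    · exact hxA.symm
    · exact hCclique hxC hyC hxy
  have hCvclique : G.IsClique (Cv : Set V) := by
    intro x hx y hy hxy
    rw [Finset.mem_coe, hCvmem] at hx hy
    rcases hx with rfl | ⟨hxC, hxA⟩ <;> rcases hy with rfl | ⟨hyC, hyA⟩
    · exact absurd rfl hxy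
    · exact hyA
    · exact hxA.symm
    · exact hCclique hxC hyC hxy
  refine ⟨{ {u, v}, C, Cu, Cv }, ?_, ?_, ?_⟩
  · refine (Finset.card_insert_le _ _).trans (Nat.succ_le_succ ?_)
    refine (Finset.card_insert_le _ _).trans (Nat.succ_le_succ ?_)
    refine (Finset.card_insert_le _ _).trans (Nat.succ_le_succ ?_)
    simp
  · intro s hs
    simp only [Finset.mem_insert, Finset.mem_singleton] at hs
    rcases hs with rfl | rfl | rfl | rfl
    · intro x hx y hy hxy
      simp only [Finset.coe_insert, Finset.coe_singleton, Set.mem_insert_iff,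
        Set.mem_singleton_iff] at hx hy
      rcases hx with rfl | rfl <;> rcases hy with rfl | rfl
      · exact absurd rfl hxy
      · exact hdom.1
      · exact hdom.1.symm
      · exact absurd rfl hxy
    · exact hCclique
    · exact hCuclique
    · exact hCvclique
  · intro x y hxy
    by_cases hxu : x = u
    · by_cases hyv : y = v
      · exact ⟨{u, v}, by simp, by simp [hxu], by simp [hyv]⟩
      · have hyu : y ≠ u := fun h => G.irrefl (hxu ▸ h ▸ hxy)
        refine ⟨Cu, by simp, ?_, ?_⟩
        · rw [hCumem]; exact Or.inl hxu
        · rw [hCumem]; exact Or.inr ⟨(hCmem y).mpr ⟨hyu, hyv⟩, hxu ▸ hxy⟩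
    by_cases hxv : x = v
    · by_cases hyu : y = u
      · exact ⟨{u, v}, by simp, by simp [hxv], by simp [hyu]⟩
      · have hyv : y ≠ v := fun h => G.irrefl (hxv ▸ h ▸ hxy)
        refine ⟨Cv, by simp, ?_, ?_⟩
        · rw [hCvmem]; exact Or.inl hxv
        · rw [hCvmem]; exact Or.inr ⟨(hCmem y).mpr ⟨hyu, hyv⟩, hxv ▸ hxy⟩
    by_cases hyu : y = u
    · refine ⟨Cu, by simp, ?_, ?_⟩
      · rw [hCumem]; exact Or.inr ⟨(hCmem x).mpr ⟨hxu, hxv⟩, (hyu ▸ hxy).symm⟩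
      · rw [hCumem]; exact Or.inl hyu
    by_cases hyv : y = v
    · refine ⟨Cv, by simp, ?_, ?_⟩
      · rw [hCvmem]; exact Or.inr ⟨(hCmem x).mpr ⟨hxu, hxv⟩, (hyv ▸ hxy).symm⟩
      · rw [hCvmem]; exact Or.inl hyv
    exact ⟨C, by simp, (hCmem x).mpr ⟨hxu, hxv⟩, (hCmem y).mpr ⟨hyu, hyv⟩⟩
end

section
/- Let G be a finite simple graph on n vertices with independence number α(G) = 2. If G has a dominating edge uv such that the graph G \ {u,v} obtained by deleting the vertices u and v is disconnected, then the edge clique cover number of G satisfies ecc(G) ≤ n. -/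
private lemma cliqueUnion' {V : Type*} [DecidableEq V] {G : SimpleGraph V} {S T : Finset V}
    (hS : G.IsClique (S : Set V)) (hT : G.IsClique (T : Set V))
    (h : ∀ s ∈ S, ∀ t ∈ T, s ≠ t → G.Adj s t) :
    G.IsClique ((S ∪ T : Finset V) : Set V) := by
  intro x hx y hy hxy
  simp only [Finset.coe_union, Set.mem_union, Finset.mem_coe] at hx hy
  rcases hx with hx | hx <;> rcases hy with hy | hy
  · exact hS hx hy hxy
  · exact h x hx y hy hxy
  · exact (h y hy x hx hxy.symm).symm
  · exact hT hx hy hxy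

private lemma cardLeFour {α : Type*} [DecidableEq α] (a b c d : α) :
    ({a, b, c, d} : Finset α).card ≤ 4 := by
  refine (Finset.card_insert_le _ _).trans (Nat.succ_le_succ ?_)
  refine (Finset.card_insert_le _ _).trans (Nat.succ_le_succ ?_)
  refine (Finset.card_insert_le _ _).trans (Nat.succ_le_succ ?_)
  simp

private lemma auxCover {V : Type*} [Fintype V] (G : SimpleGraph V) (u v : V) (A B : Finset V)
    (htri : ∀ x y z : V, x ≠ y → x ≠ z → y ≠ z →
      ¬ G.Adj x y → ¬ G.Adj x z → ¬ G.Adj y z → False)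
    (huv : G.Adj u v)
    (hAW : ∀ a ∈ A, a ≠ u ∧ a ≠ v)
    (hBW : ∀ b ∈ B, b ≠ u ∧ b ≠ v)
    (hcov : ∀ w : V, w ≠ u → w ≠ v → w ∈ A ∨ w ∈ B)
    (hdisj : ∀ a ∈ A, ∀ b ∈ B, a ≠ b)
    (hnadj : ∀ a ∈ A, ∀ b ∈ B, ¬ G.Adj a b)
    (hA : G.IsClique (A : Set V)) (hB : G.IsClique (B : Set V))
    (hAu : ∀ a ∈ A, G.Adj u a)
    (hcard : 4 ≤ Fintype.card V) :
    ∃ F : Finset (Finset V), F.card ≤ Fintype.card V ∧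
      (∀ s ∈ F, G.IsClique (s : Set V)) ∧
      ∀ x y : V, G.Adj x y → ∃ s ∈ F, x ∈ s ∧ y ∈ s := by
  classical
  have pairclique : ∀ a b : V, G.Adj a b → G.IsClique (({a, b} : Finset V) : Set V) := by
    intro a b hab
    rw [Finset.coe_insert, Finset.coe_singleton]
    exact SimpleGraph.isClique_pair.mpr fun _ => hab
  have singclique : ∀ a : V, G.IsClique (({a} : Finset V) : Set V) := by
    intro a
    rw [Finset.coe_singleton]
    exact SimpleGraph.isClique_singleton a
  have loc : ∀ z : V, z = u ∨ z = v ∨ z ∈ A ∨ z ∈ B := by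
    intro z
    by_cases h1 : z = u
    · exact Or.inl h1
    by_cases h2 : z = v
    · exact Or.inr (Or.inl h2)
    rcases hcov z h1 h2 with h | h
    · exact Or.inr (Or.inr (Or.inl h))
    · exact Or.inr (Or.inr (Or.inr h))
  -- v is complete to B or complete to A
  have hvside : (∀ b ∈ B, G.Adj v b) ∨ (∀ a ∈ A, G.Adj v a) := by
    by_contra hcon
    push_neg at hcon
    obtain ⟨⟨b₀, hb₀, hvb₀⟩, a₀, ha₀, hva₀⟩ := hcon
    exact htri v a₀ b₀ (Ne.symm (hAW a₀ ha₀).2) (Ne.symm (hBW b₀ hb₀).2)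
      (hdisj a₀ ha₀ b₀ hb₀) hva₀ hvb₀ (hnadj a₀ ha₀ b₀ hb₀)
  rcases hvside with hBv | hAv
  · -- family: A∪{u}, Av∪{u,v}, B∪{v}, Bu∪{u}
    set Av : Finset V := A.filter (fun a => G.Adj v a) with hAvdef
    set Bu : Finset V := B.filter (fun b => G.Adj u b) with hBudef
    refine ⟨{A ∪ {u}, Av ∪ {u, v}, B ∪ {v}, Bu ∪ {u}}, (cardLeFour _ _ _ _).trans hcard, ?_, ?_⟩
    · intro s hs
      simp only [Finset.mem_insert, Finset.mem_singleton] at hs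
      rcases hs with rfl | rfl | rfl | rfl
      · refine cliqueUnion' hA (singclique u) ?_
        intro a ha t ht _
        rw [Finset.mem_singleton] at ht; subst ht
        exact (hAu a ha).symm
      · refine cliqueUnion' (hA.subset (Finset.coe_subset.mpr (Finset.filter_subset _ _)))
          (pairclique u v huv) ?_
        intro a ha t ht _
        rw [Finset.mem_filter] at ha
        rw [Finset.mem_insert, Finset.mem_singleton] at ht
        rcases ht with rfl | rfl
        · exact (hAu a ha.1).symm
        · exact ha.2.symm
      · refine cliqueUnion' hB (singclique v) ?_
        intro b hb t ht _
        rw [Finset.mem_singleton] at ht; subst ht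
        exact (hBv b hb).symm
      · refine cliqueUnion' (hB.subset (Finset.coe_subset.mpr (Finset.filter_subset _ _)))
          (singclique u) ?_
        intro b hb t ht _
        rw [Finset.mem_filter] at hb
        rw [Finset.mem_singleton] at ht; subst ht
        exact hb.2.symm
    · intro p q hpq
      rcases loc p with hp' | hp' | hp | hp <;> rcases loc q with hq' | hq' | hq | hq
      · rw [hp', hq'] at hpq; exact (G.irrefl hpq).elim
      · exact ⟨Av ∪ {u, v}, by simp, by simp [hp'], by simp [hq']⟩
      · exact ⟨A ∪ {u}, by simp, by simp [hp'], by simp [hq]⟩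
      · exact ⟨Bu ∪ {u}, by simp, by simp [hp'],
          by simp [hBudef, Finset.mem_filter, hq, hp' ▸ hpq]⟩
      · exact ⟨Av ∪ {u, v}, by simp, by simp [hp'], by simp [hq']⟩
      · rw [hp', hq'] at hpq; exact (G.irrefl hpq).elim
      · exact ⟨Av ∪ {u, v}, by simp, by simp [hp'],
          by simp [hAvdef, Finset.mem_filter, hq, hp' ▸ hpq]⟩
      · exact ⟨B ∪ {v}, by simp, by simp [hp'], by simp [hq]⟩
      · exact ⟨A ∪ {u}, by simp, by simp [hp], by simp [hq']⟩
      · exact ⟨Av ∪ {u, v}, by simp,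
          by simp [hAvdef, Finset.mem_filter, hp, (hq' ▸ hpq).symm], by simp [hq']⟩
      · exact ⟨A ∪ {u}, by simp, by simp [hp], by simp [hq]⟩
      · exact (hnadj p hp q hq hpq).elim
      · exact ⟨Bu ∪ {u}, by simp,
          by simp [hBudef, Finset.mem_filter, hp, (hq' ▸ hpq).symm], by simp [hq']⟩
      · exact ⟨B ∪ {v}, by simp, by simp [hp], by simp [hq']⟩
      · exact (hnadj q hq p hp hpq.symm).elim
      · exact ⟨B ∪ {v}, by simp, by simp [hp], by simp [hq]⟩
  · -- family: A∪{u,v}, B, Bu∪{u}, Bv∪{v}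
    set Bu : Finset V := B.filter (fun b => G.Adj u b) with hBudef
    set Bv : Finset V := B.filter (fun b => G.Adj v b) with hBvdef
    refine ⟨{A ∪ {u, v}, B, Bu ∪ {u}, Bv ∪ {v}}, (cardLeFour _ _ _ _).trans hcard, ?_, ?_⟩
    · intro s hs
      simp only [Finset.mem_insert, Finset.mem_singleton] at hs
      rcases hs with rfl | rfl | rfl | rfl
      · refine cliqueUnion' hA (pairclique u v huv) ?_
        intro a ha t ht _
        rw [Finset.mem_insert, Finset.mem_singleton] at ht
        rcases ht with rfl | rfl
        · exact (hAu a ha).symm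
        · exact (hAv a ha).symm
      · exact hB
      · refine cliqueUnion' (hB.subset (Finset.coe_subset.mpr (Finset.filter_subset _ _)))
          (singclique u) ?_
        intro b hb t ht _
        rw [Finset.mem_filter] at hb
        rw [Finset.mem_singleton] at ht; subst ht
        exact hb.2.symm
      · refine cliqueUnion' (hB.subset (Finset.coe_subset.mpr (Finset.filter_subset _ _)))
          (singclique v) ?_
        intro b hb t ht _
        rw [Finset.mem_filter] at hb
        rw [Finset.mem_singleton] at ht; subst ht
        exact hb.2.symm
    · intro p q hpq
      rcases loc p with hp' | hp' | hp | hp <;> rcases loc q with hq' | hq' | hq | hq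
      · rw [hp', hq'] at hpq; exact (G.irrefl hpq).elim
      · exact ⟨A ∪ {u, v}, by simp, by simp [hp'], by simp [hq']⟩
      · exact ⟨A ∪ {u, v}, by simp, by simp [hp'], by simp [hq]⟩
      · exact ⟨Bu ∪ {u}, by simp, by simp [hp'],
          by simp [hBudef, Finset.mem_filter, hq, hp' ▸ hpq]⟩
      · exact ⟨A ∪ {u, v}, by simp, by simp [hp'], by simp [hq']⟩
      · rw [hp', hq'] at hpq; exact (G.irrefl hpq).elim
      · exact ⟨A ∪ {u, v}, by simp, by simp [hp'], by simp [hq]⟩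
      · exact ⟨Bv ∪ {v}, by simp, by simp [hp'],
          by simp [hBvdef, Finset.mem_filter, hq, hp' ▸ hpq]⟩
      · exact ⟨A ∪ {u, v}, by simp, by simp [hp], by simp [hq']⟩
      · exact ⟨A ∪ {u, v}, by simp, by simp [hp], by simp [hq']⟩
      · exact ⟨A ∪ {u, v}, by simp, by simp [hp], by simp [hq]⟩
      · exact (hnadj p hp q hq hpq).elim
      · exact ⟨Bu ∪ {u}, by simp,
          by simp [hBudef, Finset.mem_filter, hp, (hq' ▸ hpq).symm], by simp [hq']⟩
      · exact ⟨Bv ∪ {v}, by simp,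
          by simp [hBvdef, Finset.mem_filter, hp, (hq' ▸ hpq).symm], by simp [hq']⟩
      · exact (hnadj q hq p hp hpq.symm).elim
      · exact ⟨B, by simp, hp, hq⟩

/-- If `G` has independence number 2 and a dominating edge `uv` such that
`G \ {u,v}` is disconnected, then `ecc(G) ≤ n`. -/
theorem stmt_8 {V : Type*} [Fintype V] (G : SimpleGraph V) (u v : V)
    (hα : IndepNumEq G 2)
    (hdom : IsDominatingEdge G u v)
    (hdisc : ¬ (G.induce {w : V | w ≠ u ∧ w ≠ v}).Connected) :
    ∃ F : Finset (Finset V), F.card ≤ Fintype.card V ∧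
      (∀ s ∈ F, G.IsClique (s : Set V)) ∧
      ∀ x y : V, G.Adj x y → ∃ s ∈ F, x ∈ s ∧ y ∈ s := by
  classical
  obtain ⟨huv, hdome⟩ := hdom
  obtain ⟨-, hle⟩ := hα
  -- no independent triple
  have htri : ∀ x y z : V, x ≠ y → x ≠ z → y ≠ z →
      ¬ G.Adj x y → ¬ G.Adj x z → ¬ G.Adj y z → False := by
    intro x y z hxy hxz hyz nxy nxz nyz
    have hind : IsIndepSet G (↑({x, y, z} : Finset V)) := by
      intro p hp q hq hpq
      simp only [Finset.coe_insert, Finset.coe_singleton, Set.mem_insert_iff,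
        Set.mem_singleton_iff] at hp hq
      rcases hp with rfl | rfl | rfl <;> rcases hq with rfl | rfl | rfl
      · exact absurd rfl hpq
      · exact nxy
      · exact nxz
      · exact fun h => nxy h.symm
      · exact absurd rfl hpq
      · exact nyz
      · exact fun h => nxz h.symm
      · exact fun h => nyz h.symm
      · exact absurd rfl hpq
    have hcard3 : ({x, y, z} : Finset V).card = 3 := by
      rw [Finset.card_insert_of_notMem (by simp [hxy, hxz]),
        Finset.card_insert_of_notMem (by simp [hyz]), Finset.card_singleton]
    have := hle _ hind
    omega
  by_cases hW : ∃ w : V, w ≠ u ∧ w ≠ v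
  · obtain ⟨w0, hw0⟩ := hW
    have hne' : Nonempty ↥{w : V | w ≠ u ∧ w ≠ v} := ⟨⟨w0, hw0⟩⟩
    rw [SimpleGraph.connected_iff] at hdisc
    have hpre : ¬ (G.induce {w : V | w ≠ u ∧ w ≠ v}).Preconnected := by
      intro h
      exact hdisc ⟨h, hne'⟩
    rw [SimpleGraph.Preconnected] at hpre
    push_neg at hpre
    obtain ⟨x, y, hxy⟩ := hpre
    set GW := G.induce {w : V | w ≠ u ∧ w ≠ v} with hGW
    set A : Set V := {a : V | ∃ h : a ≠ u ∧ a ≠ v, GW.Reachable x ⟨a, h⟩} with hAdef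
    set B : Set V := {b : V | ∃ h : b ≠ u ∧ b ≠ v, ¬ GW.Reachable x ⟨b, h⟩} with hBdef
    have hxA : (x : V) ∈ A := ⟨x.2, SimpleGraph.Reachable.refl x⟩
    have hyB : (y : V) ∈ B := ⟨y.2, hxy⟩
    have hclosure : ∀ a ∈ A, ∀ b : V, b ∈ B → G.Adj a b → False := by
      rintro a ⟨ha, hra⟩ b ⟨hb, hrb⟩ hab
      exact hrb (hra.trans (SimpleGraph.Adj.reachable (by exact hab)))
    have hnadj : ∀ a ∈ A, ∀ b ∈ B, ¬ G.Adj a b := by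
      intro a ha b hb hab
      exact hclosure a ha b hb hab
    have hdisjAB : ∀ a ∈ A, ∀ b ∈ B, a ≠ b := by
      rintro a ⟨ha, hra⟩ b ⟨hb, hrb⟩ rfl
      exact hrb hra
    have hAW : ∀ a ∈ A, a ≠ u ∧ a ≠ v := fun a ha => ha.1
    have hBW : ∀ b ∈ B, b ≠ u ∧ b ≠ v := fun b hb => hb.1
    have hcovW : ∀ w : V, w ≠ u → w ≠ v → w ∈ A ∨ w ∈ B := by
      intro w h1 h2
      by_cases hr : GW.Reachable x ⟨w, ⟨h1, h2⟩⟩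
      · exact Or.inl ⟨⟨h1, h2⟩, hr⟩
      · exact Or.inr ⟨⟨h1, h2⟩, hr⟩
    have hAcl : G.IsClique A := by
      intro p hp q hq hpq
      by_contra hnpq
      exact htri p q (y : V) hpq (hdisjAB p hp _ hyB) (hdisjAB q hq _ hyB)
        hnpq (hnadj p hp _ hyB) (hnadj q hq _ hyB)
    have hBcl : G.IsClique B := by
      intro p hp q hq hpq
      by_contra hnpq
      exact htri p q (x : V) hpq (fun h => hdisjAB _ hxA p hp h.symm)
        (fun h => hdisjAB _ hxA q hq h.symm) hnpq
        (fun h => hnadj _ hxA p hp h.symm) (fun h => hnadj _ hxA q hq h.symm)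
    -- finsets
    set FA : Finset V := (A.toFinite).toFinset with hFA
    set FB : Finset V := (B.toFinite).toFinset with hFB
    have memFA : ∀ a : V, a ∈ FA ↔ a ∈ A := fun a => Set.Finite.mem_toFinset _
    have memFB : ∀ b : V, b ∈ FB ↔ b ∈ B := fun b => Set.Finite.mem_toFinset _
    have hAclF : G.IsClique (FA : Set V) := by
      refine hAcl.subset ?_
      intro z hz
      exact (memFA z).mp hz
    have hBclF : G.IsClique (FB : Set V) := by
      refine hBcl.subset ?_
      intro z hz
      exact (memFB z).mp hz
    have hAWF : ∀ a ∈ FA, a ≠ u ∧ a ≠ v := fun a ha => hAW a ((memFA a).mp ha)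
    have hBWF : ∀ b ∈ FB, b ≠ u ∧ b ≠ v := fun b hb => hBW b ((memFB b).mp hb)
    have hcovF : ∀ w : V, w ≠ u → w ≠ v → w ∈ FA ∨ w ∈ FB := by
      intro w h1 h2
      rcases hcovW w h1 h2 with h | h
      · exact Or.inl ((memFA w).mpr h)
      · exact Or.inr ((memFB w).mpr h)
    have hdisjF : ∀ a ∈ FA, ∀ b ∈ FB, a ≠ b :=
      fun a ha b hb => hdisjAB a ((memFA a).mp ha) b ((memFB b).mp hb)
    have hnadjF : ∀ a ∈ FA, ∀ b ∈ FB, ¬ G.Adj a b :=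
      fun a ha b hb => hnadj a ((memFA a).mp ha) b ((memFB b).mp hb)
    -- cardinality
    have hxyne : (x : V) ≠ (y : V) := hdisjAB _ hxA _ hyB
    have hcard : 4 ≤ Fintype.card V := by
      have hsub : ({u, v, (x : V), (y : V)} : Finset V) ⊆ Finset.univ :=
        Finset.subset_univ _
      have h4 : ({u, v, (x : V), (y : V)} : Finset V).card = 4 := by
        rw [Finset.card_insert_of_notMem (by
            simp [huv.ne, Ne.symm x.2.1, Ne.symm y.2.1]),
          Finset.card_insert_of_notMem (by
            simp [Ne.symm x.2.2, Ne.symm y.2.2]),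
          Finset.card_insert_of_notMem (by simp [hxyne]), Finset.card_singleton]
      calc 4 = ({u, v, (x : V), (y : V)} : Finset V).card := h4.symm
        _ ≤ Finset.univ.card := Finset.card_le_card hsub
        _ = Fintype.card V := Finset.card_univ
    -- u is complete to A or to B
    have huside : (∀ a ∈ FA, G.Adj u a) ∨ (∀ b ∈ FB, G.Adj u b) := by
      by_contra hcon
      push_neg at hcon
      obtain ⟨⟨a₀, ha₀, hua₀⟩, b₀, hb₀, hub₀⟩ := hcon
      exact htri u a₀ b₀ (Ne.symm (hAWF a₀ ha₀).1) (Ne.symm (hBWF b₀ hb₀).1)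
        (hdisjF a₀ ha₀ b₀ hb₀) hua₀ hub₀ (hnadjF a₀ ha₀ b₀ hb₀)
    rcases huside with hAu | hBu
    · exact auxCover G u v FA FB htri huv hAWF hBWF hcovF hdisjF hnadjF hAclF hBclF hAu hcard
    · exact auxCover G u v FB FA htri huv hBWF hAWF
        (fun w h1 h2 => (hcovF w h1 h2).symm)
        (fun b hb a ha => (hdisjF a ha b hb).symm)
        (fun b hb a ha h => hnadjF a ha b hb h.symm)
        hBclF hAclF hBu hcard
  · -- V = {u, v}
    push_neg at hW
    refine ⟨{{u, v}}, ?_, ?_, ?_⟩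
    · have : 0 < Fintype.card V := Fintype.card_pos_iff.mpr ⟨u⟩
      simpa using Nat.succ_le_of_lt this
    · intro s hs
      rw [Finset.mem_singleton] at hs; subst hs
      rw [Finset.coe_insert, Finset.coe_singleton]
      exact SimpleGraph.isClique_pair.mpr fun _ => huv
    · intro p q hpq
      have hp : p = u ∨ p = v := by
        by_cases h : p = u
        · exact Or.inl h
        · exact Or.inr (hW p h)
      have hq : q = u ∨ q = v := by
        by_cases h : q = u
        · exact Or.inl h
        · exact Or.inr (hW q h)
      refine ⟨{u, v}, Finset.mem_singleton_self _, ?_, ?_⟩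
      · rcases hp with rfl | rfl <;> simp
      · rcases hq with rfl | rfl <;> simp
end

section
/- Let H be a finite simple graph on m vertices with independence number α(H) ≤ 2, with m ≥ 4, and suppose H is not isomorphic to the cycle C5 on five vertices. Then there exists a family of at most ⌈m/2⌉ cliques of H whose union is the entire vertex set of H. -/

lemma cover_aux {V : Type*} (H : SimpleGraph V)
    (htri : ∀ v u w : V, u ≠ v → w ≠ v → u ≠ w → ¬H.Adj v u → ¬H.Adj v w → H.Adj u w)
    (f : V → ℕ) (hf : Function.Injective f) :
    ∀ s : Finset V, ∃ F : Finset (Finset V),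
      F.card ≤ max 2 ((s.card + 1) / 2) ∧
      (∀ t ∈ F, H.IsClique (t : Set V)) ∧
      ∀ w ∈ s, ∃ t ∈ F, w ∈ t := by
  classical
  intro s
  induction s using Finset.strongInductionOn with
  | _ s ih =>
  by_cases hdeg : ∃ v ∈ s, ∃ u ∈ s, ∃ w ∈ s, u ≠ v ∧ w ≠ v ∧ u ≠ w ∧ ¬H.Adj v u ∧ ¬H.Adj v w
  · obtain ⟨v, hv, u, hu, w, hw, huv, hwv, huw, hau, haw⟩ := hdeg
    have hadj : H.Adj u w := htri v u w huv hwv huw hau haw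
    by_cases hbig : 5 ≤ s.card
    · -- recurse on s minus {u, w}
      have hwmem : w ∈ s.erase u := Finset.mem_erase.2 ⟨fun h => huw h.symm, hw⟩
      have hsub : (s.erase u).erase w ⊂ s :=
        lt_of_le_of_lt (Finset.erase_subset _ _) (Finset.erase_ssubset hu)
      obtain ⟨F', hF'card, hF'cl, hF'cov⟩ := ih _ hsub
      have hcard' : ((s.erase u).erase w).card = s.card - 2 := by
        rw [Finset.card_erase_of_mem hwmem, Finset.card_erase_of_mem hu]
        omega
      refine ⟨insert {u, w} F', ?_, ?_, ?_⟩
      · have h1 : (insert ({u, w} : Finset V) F').card ≤ F'.card + 1 :=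
          Finset.card_insert_le _ _
        rw [hcard'] at hF'card
        omega
      · intro t ht
        rcases Finset.mem_insert.1 ht with h | h
        · subst h
          intro x hx y hy hxy
          simp only [Finset.coe_insert, Finset.coe_singleton, Set.mem_insert_iff,
            Set.mem_singleton_iff] at hx hy
          rcases hx with rfl | rfl <;> rcases hy with rfl | rfl
          · exact absurd rfl hxy
          · exact hadj
          · exact hadj.symm
          · exact absurd rfl hxy
        · exact hF'cl t h
      · intro z hz
        by_cases hz' : z ∈ (s.erase u).erase w
        · obtain ⟨t, ht, hzt⟩ := hF'cov z hz'
          exact ⟨t, Finset.mem_insert_of_mem ht, hzt⟩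
        · refine ⟨{u, w}, Finset.mem_insert_self _ _, ?_⟩
          simp only [Finset.mem_erase] at hz'
          simp only [Finset.mem_insert, Finset.mem_singleton]
          tauto
    · -- small case: s.card ≤ 4
      set C1 := s.filter (fun x => ¬(x = v ∨ H.Adj v x)) with hC1
      set C2 := s.filter (fun x => x = v ∨ H.Adj v x) with hC2
      have hcards : C2.card + C1.card = s.card := Finset.card_filter_add_card_filter_not _
      have huC1 : u ∈ C1 := Finset.mem_filter.2 ⟨hu, by push_neg; exact ⟨huv, hau⟩⟩
      have hwC1 : w ∈ C1 := Finset.mem_filter.2 ⟨hw, by push_neg; exact ⟨hwv, haw⟩⟩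
      have hC1two : 2 ≤ C1.card := by
        have : ({u, w} : Finset V) ⊆ C1 := by
          intro x hx; rcases Finset.mem_insert.1 hx with rfl | hx
          · exact huC1
          · exact (Finset.mem_singleton.1 hx) ▸ hwC1
        calc 2 = ({u, w} : Finset V).card := by
                rw [Finset.card_insert_of_notMem (by simp [huw]), Finset.card_singleton]
          _ ≤ C1.card := Finset.card_le_card this
      have hC2two : C2.card ≤ 2 := by omega
      refine ⟨{C1, C2}, ?_, ?_, ?_⟩
      · have h1 : ({C1, C2} : Finset (Finset V)).card ≤ 2 := by
          refine le_trans (Finset.card_insert_le _ _) ?_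
          simp only [Finset.card_singleton]
          omega
        exact le_trans h1 (le_max_left _ _)
      · intro t ht
        rcases Finset.mem_insert.1 ht with rfl | ht
        · -- C1 is a clique
          intro x hx y hy hxy
          simp only [hC1, Finset.coe_filter, Set.mem_setOf_eq] at hx hy
          push_neg at hx hy
          exact htri v x y hx.2.1 hy.2.1 hxy hx.2.2 hy.2.2
        · rw [Finset.mem_singleton.1 ht]
          -- C2 is a clique (it has at most 2 elements, one of which is v)
          intro x hx y hy hxy
          simp only [hC2, Finset.coe_filter, Set.mem_setOf_eq] at hx hy
          rcases hx.2 with rfl | hax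
          · rcases hy.2 with rfl | hay
            · exact absurd rfl hxy
            · exact hay
          · rcases hy.2 with rfl | hay
            · exact hax.symm
            · exfalso
              have hxv : x ≠ v := fun h => (h ▸ hax).ne rfl
              have hyv : y ≠ v := fun h => (h ▸ hay).ne rfl
              have hvC2 : v ∈ C2 := Finset.mem_filter.2 ⟨hv, Or.inl rfl⟩
              have hxC2 : x ∈ C2 := Finset.mem_filter.2 ⟨hx.1, Or.inr hax⟩
              have hyC2 : y ∈ C2 := Finset.mem_filter.2 ⟨hy.1, Or.inr hay⟩
              have hsubs : ({x, y, v} : Finset V) ⊆ C2 := by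
                intro z hz
                simp only [Finset.mem_insert, Finset.mem_singleton] at hz
                rcases hz with rfl | rfl | rfl <;> assumption
              have h3 : ({x, y, v} : Finset V).card = 3 := by
                rw [Finset.card_insert_of_notMem (by simp [hxy, hxv]),
                  Finset.card_insert_of_notMem (by simp [hyv]), Finset.card_singleton]
              have := Finset.card_le_card hsubs
              omega
      · intro z hz
        by_cases hzc : z = v ∨ H.Adj v z
        · exact ⟨C2, by simp, Finset.mem_filter.2 ⟨hz, hzc⟩⟩
        · exact ⟨C1, by simp, Finset.mem_filter.2 ⟨hz, hzc⟩⟩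
  · -- every vertex has at most one non-neighbor in s
    push_neg at hdeg
    set A := s.filter (fun x => ∀ y ∈ s, y ≠ x → ¬H.Adj x y → f x < f y) with hA
    set B := s.filter (fun x => ∃ y ∈ s, y ≠ x ∧ ¬H.Adj x y ∧ f y < f x) with hB
    refine ⟨{A, B}, ?_, ?_, ?_⟩
    · have h1 : ({A, B} : Finset (Finset V)).card ≤ 2 := by
        refine le_trans (Finset.card_insert_le _ _) ?_
        simp only [Finset.card_singleton]
        omega
      exact le_trans h1 (le_max_left _ _)
    · intro t ht
      rcases Finset.mem_insert.1 ht with rfl | ht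
      · -- A is a clique
        intro x hx y hy hxy
        simp only [hA, Finset.coe_filter, Set.mem_setOf_eq] at hx hy
        by_contra hna
        have h1 : f x < f y := hx.2 y hy.1 (Ne.symm hxy) hna
        have h2 : f y < f x := hy.2 x hx.1 hxy (fun h => hna h.symm)
        omega
      · rw [Finset.mem_singleton.1 ht]
        -- B is a clique
        intro x hx y hy hxy
        simp only [hB, Finset.coe_filter, Set.mem_setOf_eq] at hx hy
        by_contra hna
        obtain ⟨yx, hyxs, hyxne, hyxna, hyxlt⟩ := hx.2
        obtain ⟨yy, hyys, hyyne, hyyna, hyylt⟩ := hy.2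
        have hyx_eq : yx = y := by
          by_contra hne
          exact hna (hdeg x hx.1 yx hyxs y hy.1 hyxne (Ne.symm hxy) hne hyxna)
        have hyy_eq : yy = x := by
          by_contra hne
          exact hna (hdeg y hy.1 yy hyys x hx.1 hyyne hxy hne hyyna).symm
        subst hyx_eq; subst hyy_eq
        omega
    · intro z hz
      by_cases hzb : ∃ y ∈ s, y ≠ z ∧ ¬H.Adj z y ∧ f y < f z
      · exact ⟨B, by simp, Finset.mem_filter.2 ⟨hz, hzb⟩⟩
      · refine ⟨A, by simp, Finset.mem_filter.2 ⟨hz, ?_⟩⟩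
        push_neg at hzb
        intro y hy hyz hna
        have h1 : f z ≤ f y := hzb y hy hyz hna
        have h2 : f z ≠ f y := hf.ne (Ne.symm hyz)
        omega

/-- The vertices of a graph on `m ≥ 4` vertices with independence number at
most 2 that is not a 5-cycle can be covered by at most `⌈m/2⌉` cliques. -/
theorem stmt_10 {V : Type*} [Fintype V] (H : SimpleGraph V)
    (hα : ∀ s : Finset V, IsIndepSet H ↑s → s.card ≤ 2)
    (hm : 4 ≤ Fintype.card V)
    (hC5 : ¬ Nonempty (H ≃g SimpleGraph.cycleGraph 5)) :
    ∃ F : Finset (Finset V),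
      (F.card : ℤ) ≤ ⌈(Fintype.card V : ℚ) / 2⌉ ∧
      (∀ s ∈ F, H.IsClique (s : Set V)) ∧
      ∀ w : V, ∃ s ∈ F, w ∈ s := by
  classical
  have htri : ∀ v u w : V, u ≠ v → w ≠ v → u ≠ w → ¬H.Adj v u → ¬H.Adj v w → H.Adj u w := by
    intro v u w huv hwv huw hvu hvw
    by_contra hna
    have hind : IsIndepSet H (↑({v, u, w} : Finset V)) := by
      intro a ha b hb hab
      simp only [Finset.coe_insert, Finset.coe_singleton, Set.mem_insert_iff,
        Set.mem_singleton_iff] at ha hb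
      rcases ha with rfl | rfl | rfl <;> rcases hb with rfl | rfl | rfl <;>
        first
          | exact absurd rfl hab
          | exact hvu
          | exact hvw
          | exact fun h => hvu h.symm
          | exact fun h => hvw h.symm
          | exact hna
          | exact fun h => hna h.symm
    have h3 : ({v, u, w} : Finset V).card = 3 := by
      rw [Finset.card_insert_of_notMem (by simp [Ne.symm huv, Ne.symm hwv]),
        Finset.card_insert_of_notMem (by simp [huw]), Finset.card_singleton]
    have := hα _ hind
    omega
  obtain ⟨f, hf⟩ : ∃ f : V → ℕ, Function.Injective f :=
    ⟨fun x => ((Fintype.equivFin V) x : ℕ),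
      fun a b h => (Fintype.equivFin V).injective (Fin.ext h)⟩
  obtain ⟨F, hFc, hFcl, hFcov⟩ := cover_aux H htri f hf Finset.univ
  refine ⟨F, ?_, hFcl, fun w => hFcov w (Finset.mem_univ w)⟩
  have hceil : (⌈(Fintype.card V : ℚ) / 2⌉ : ℤ) = ((Fintype.card V + 1) / 2 : ℕ) := by
    rcases Nat.even_or_odd (Fintype.card V) with ⟨k, hk⟩ | ⟨k, hk⟩
    · rw [hk]
      rw [show (((k + k : ℕ) : ℚ)) / 2 = ((k : ℤ) : ℚ) by push_cast; ring, Int.ceil_intCast]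
      push_cast
      omega
    · rw [hk]
      rw [show (((2 * k + 1 : ℕ) : ℚ)) / 2 = ((k : ℤ) : ℚ) + 1 / 2 by push_cast; ring]
      rw [add_comm, Int.ceil_add_intCast]
      rw [show ⌈(1 / 2 : ℚ)⌉ = 1 by rw [Int.ceil_eq_iff] <;> norm_num]
      push_cast
      omega
  rw [hceil]
  rw [Finset.card_univ] at hFc
  have : max 2 ((Fintype.card V + 1) / 2) = (Fintype.card V + 1) / 2 := by omega
  rw [this] at hFc
  exact_mod_cast hFc
end

section
/- Let G be a finite simple graph with independence number α(G) = 2, let xy be a dominating edge of G, and let z be a vertex of G distinct from x and y. Then the following are equivalent: (i) there exists a clique K of G with N̄[z] ⊆ K, x ∈ K, y ∈ K, and such that every vertex of K not lying in N̄[z] is adjacent to z by a dominating edge of G; (ii) at least one of the following holds: zx is a dominating edge and z is not adjacent to y; zy is a dominating edge and z is not adjacent to x; zx and zy are both dominating edges. -/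
/-- Characterization of when a dominating edge `xy` is covered by an extension
of the clique `N̄[z]`. -/
theorem stmt_12 {V : Type*} [Fintype V] (G : SimpleGraph V)
    (hα : IndepNumEq G 2) (x y z : V)
    (hxy : IsDominatingEdge G x y) (hzx : z ≠ x) (hzy : z ≠ y) :
    (∃ K : Set V, G.IsClique K ∧ {w : V | w ≠ z ∧ ¬ G.Adj z w} ⊆ K ∧
        x ∈ K ∧ y ∈ K ∧
        ∀ w ∈ K, w ∉ {w : V | w ≠ z ∧ ¬ G.Adj z w} → IsDominatingEdge G z w) ↔
      ((IsDominatingEdge G z x ∧ ¬ G.Adj z y) ∨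
        (IsDominatingEdge G z y ∧ ¬ G.Adj z x) ∨
        (IsDominatingEdge G z x ∧ IsDominatingEdge G z y)) := by
  classical
  -- N̄[z] is a clique
  have hnbar : ∀ a b : V, a ≠ z → ¬ G.Adj z a → b ≠ z → ¬ G.Adj z b → a ≠ b → G.Adj a b := by
    intro a b haz hza hbz hzb hab
    by_contra hadj
    have h1 : a ∉ ({b} : Finset V) := by simpa using hab
    have h2 : z ∉ ({a, b} : Finset V) := by
      simp only [Finset.mem_insert, Finset.mem_singleton]
      push_neg
      exact ⟨Ne.symm haz, Ne.symm hbz⟩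
    have hcard : ({z, a, b} : Finset V).card = 3 := by
      rw [Finset.card_insert_of_notMem h2, Finset.card_insert_of_notMem h1,
        Finset.card_singleton]
    have hind : IsIndepSet G (({z, a, b} : Finset V) : Set V) := by
      intro u hu v hv huv
      simp only [Finset.coe_insert, Finset.coe_singleton, Set.mem_insert_iff,
        Set.mem_singleton_iff] at hu hv
      rcases hu with rfl | rfl | rfl <;> rcases hv with rfl | rfl | rfl <;>
        first
          | exact absurd rfl huv
          | exact hza
          | exact hzb
          | exact hadj
          | exact fun h => hza h.symm
          | exact fun h => hzb h.symm
          | exact fun h => hadj h.symm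
    have := hα.2 _ hind
    omega
  set N : Set V := {w | w ≠ z ∧ ¬ G.Adj z w} with hN
  have hNclique : G.IsClique N := by
    intro a ha b hb hab
    exact hnbar a b ha.1 ha.2 hb.1 hb.2 hab
  have hinsx : ∀ u : V, G.Adj z u → IsDominatingEdge G z u → G.IsClique (insert u N) := by
    intro u hzu hdu
    refine hNclique.insert fun b hb hbu => ?_
    rcases hdu.2 b hb.1 (fun h => hb.2 (h ▸ hzu)) with h | h
    · exact absurd h.symm hb.2
    · exact h.symm
  constructor
  · rintro ⟨K, hK, hsub, hxK, hyK, hdom⟩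
    by_cases hax : G.Adj z x <;> by_cases hay : G.Adj z y
    · exact Or.inr (Or.inr ⟨hdom x hxK (fun h => h.2 hax), hdom y hyK (fun h => h.2 hay)⟩)
    · exact Or.inl ⟨hdom x hxK (fun h => h.2 hax), hay⟩
    · exact Or.inr (Or.inl ⟨hdom y hyK (fun h => h.2 hay), hax⟩)
    · rcases hxy.2 z hzx hzy with h | h
      · exact absurd h hax
      · exact absurd h hay
  · rintro (⟨hdx, hny⟩ | ⟨hdy, hnx⟩ | ⟨hdx, hdy⟩)
    · refine ⟨insert x N, hinsx x hdx.1 hdx, Set.subset_insert _ _, Set.mem_insert _ _,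
        Set.mem_insert_of_mem _ ⟨Ne.symm hzy, hny⟩, ?_⟩
      rintro w (rfl | hw) hwN
      · exact hdx
      · exact absurd hw hwN
    · refine ⟨insert y N, hinsx y hdy.1 hdy, Set.subset_insert _ _,
        Set.mem_insert_of_mem _ ⟨Ne.symm hzx, hnx⟩, Set.mem_insert _ _, ?_⟩
      rintro w (rfl | hw) hwN
      · exact hdy
      · exact absurd hw hwN
    · refine ⟨insert x (insert y N), ?_, (Set.subset_insert _ _).trans (Set.subset_insert _ _),
        Set.mem_insert _ _, Set.mem_insert_of_mem _ (Set.mem_insert _ _), ?_⟩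
      · refine (hinsx y hdy.1 hdy).insert fun b hb hbx => ?_
        rcases hb with rfl | hb
        · exact hxy.1
        · rcases hdx.2 b hb.1 (fun h => hb.2 (h ▸ hdx.1)) with h | h
          · exact absurd h.symm hb.2
          · exact h.symm
      · rintro w (rfl | rfl | hw) hwN
        · exact hdx
        · exact hdy
        · exact absurd hw hwN
end

section
/- Let G be a finite simple graph with independence number α(G) = 2 that contains no incompatible double top. Let z, y1, y2, w1, w2 be vertices of G with y1 ≠ y2 and w1 ≠ w2, such that w1 and w2 both lie in N̄[z], and such that zy1, zy2, y1w1 and y2w2 are all dominating edges of G. Then y1y2 is an edge of G. -/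
/-- `x0x1x2x3x4` is a double top: a path on five distinct vertices all of whose
edges are dominating, with `x2` adjacent neither to `x0` nor to `x4`. -/
def IsDoubleTop {V : Type*} (G : SimpleGraph V) (x0 x1 x2 x3 x4 : V) : Prop :=
  [x0, x1, x2, x3, x4].Pairwise (· ≠ ·) ∧
  IsDominatingEdge G x0 x1 ∧ IsDominatingEdge G x1 x2 ∧
  IsDominatingEdge G x2 x3 ∧ IsDominatingEdge G x3 x4 ∧
  ¬ G.Adj x2 x0 ∧ ¬ G.Adj x2 x4

/-- `G` contains an incompatible double top: a double top `x0x1x2x3x4` with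
`x1x3` not an edge. -/
def HasIncompatibleDoubleTop {V : Type*} (G : SimpleGraph V) : Prop :=
  ∃ x0 x1 x2 x3 x4 : V, IsDoubleTop G x0 x1 x2 x3 x4 ∧ ¬ G.Adj x1 x3

/-- `G` contains a supercycle: a cycle `u 0, …, u k` (`k ≥ 3`, distinct
vertices, indices mod `k+1`) all of whose edges are dominating and such that
`u (i-1)` and `u (i+1)` are adjacent for every `i`. -/
def HasSupercycle {V : Type*} (G : SimpleGraph V) : Prop :=
  ∃ k : ℕ, 3 ≤ k ∧ ∃ u : ZMod (k + 1) → V, Function.Injective u ∧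
    (∀ i, IsDominatingEdge G (u i) (u (i + 1))) ∧
    (∀ i, G.Adj (u (i - 1)) (u (i + 1)))

/-- In a graph with independence number 2 and no incompatible double top, two
possible extensions `y1`, `y2` of the clique `N̄[z]`, each covering a
dominating edge into `N̄[z]`, must be adjacent. -/
theorem stmt_13 {V : Type*} [Fintype V] (G : SimpleGraph V)
    (hα : IndepNumEq G 2)
    (hdt : ¬ HasIncompatibleDoubleTop G)
    (z y1 y2 w1 w2 : V) (hy : y1 ≠ y2) (hw : w1 ≠ w2)
    (hw1 : w1 ∈ {w : V | w ≠ z ∧ ¬ G.Adj z w})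
    (hw2 : w2 ∈ {w : V | w ≠ z ∧ ¬ G.Adj z w})
    (hzy1 : IsDominatingEdge G z y1) (hzy2 : IsDominatingEdge G z y2)
    (hy1w1 : IsDominatingEdge G y1 w1) (hy2w2 : IsDominatingEdge G y2 w2) :
    G.Adj y1 y2 := by
  obtain ⟨hw1z, hw1a⟩ := hw1
  obtain ⟨hw2z, hw2a⟩ := hw2
  by_contra hne
  apply hdt
  refine ⟨w1, y1, z, y2, w2, ⟨?_, ?_, ?_, hzy2, hy2w2, hw1a, hw2a⟩, hne⟩
  · -- distinctness
    have hy1z : y1 ≠ z := fun h => G.loopless.irrefl z (h ▸ hzy1.1)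
    have hy2z : y2 ≠ z := fun h => G.loopless.irrefl z (h ▸ hzy2.1)
    have hy1w1 : y1 ≠ w1 := fun h => G.loopless.irrefl w1 (h ▸ hy1w1.1)
    have hy2w2 : y2 ≠ w2 := fun h => G.loopless.irrefl w2 (h ▸ hy2w2.1)
    have h1 : w1 ≠ y1 := hy1w1 ∘ Eq.symm
    have h2 : w1 ≠ y2 := fun h => hw1a (h ▸ hzy2.1)
    have h3 : y1 ≠ w2 := fun h => hw2a (h ▸ hzy1.1)
    have h4 : z ≠ y2 := hy2z.symm
    have h5 : z ≠ w2 := hw2z.symm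
    have h6 : z ≠ w1 := hw1z.symm
    simp only [List.pairwise_cons, List.mem_cons, List.not_mem_nil, List.mem_singleton]
    aesop
  · exact ⟨hy1w1.1.symm, fun w hwa hwb => (hy1w1.2 w hwb hwa).symm⟩
  · exact ⟨hzy1.1.symm, fun w hwa hwb => (hzy1.2 w hwb hwa).symm⟩
end
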